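/- arXiv:2005.02045 — 6 statements merged into one kernel-verified Lean document; each statement's English description precedes it below -/
import Mathlib

section
/- For every real Banach space X, the index 𝒯^cc(X) is unchanged if convex combinations of relatively weakly open subsets are replaced by convex combinations of slices; that is, 𝒯^cc(X) = inf{ r > 0 : there exist x ∈ S_X, n ∈ ℕ, λ_i ≥ 0 with Σ_{i=1}^n λ_i = 1, and slices S_1, …, S_n of B_X such that Σ_{i=1}^n λ_i S_i ⊆ B(x,r) }. -/
open Metric Set

noncomputable section

variable (X : Type*) [NormedAddCommGroup X] [NormedSpace ℝ X]

/-- A subset `U` of `X` is weakly open if it is open in the weak topology of `X`. -/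
def IsWeaklyOpen (U : Set X) : Prop := IsOpen (toWeakSpace ℝ X '' U)

/-- The slice `S(B_X, f, α) = {x ∈ B_X : f x > 1 - α}` of the closed unit ball of `X`. -/
def sliceSet (f : X →L[ℝ] ℝ) (α : ℝ) : Set X :=
  {y ∈ closedBall (0 : X) 1 | 1 - α < f y}

/-- `S` is a slice of the closed unit ball of `X`, i.e. `S = S(B_X, f, α)` for some norm-one
functional `f` and some `α > 0`. -/
def IsSlice (S : Set X) : Prop :=
  ∃ f : X →L[ℝ] ℝ, ‖f‖ = 1 ∧ ∃ α > (0 : ℝ), S = sliceSet X f α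

/-- The Daugavet index of thickness `𝒯ˢ(X)`: the infimum of all `r > 0` such that some slice of
the closed unit ball is contained in a closed ball of radius `r` centered at a point of the unit
sphere. -/
def Ts : ℝ :=
  sInf {r : ℝ | 0 < r ∧ ∃ x : X, ‖x‖ = 1 ∧ ∃ S : Set X, IsSlice X S ∧ S ⊆ closedBall x r}

/-- `W` is a nonempty relatively weakly open subset of the closed unit ball of `X`. -/
def IsRelWeakOpen (W : Set X) : Prop :=
  W.Nonempty ∧ ∃ U : Set X, IsWeaklyOpen X U ∧ W = closedBall (0 : X) 1 ∩ U

/-- The Daugavet index of thickness `𝒯(X)`: the infimum of all `r > 0` such that some nonempty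
relatively weakly open subset of the closed unit ball is contained in a closed ball of radius `r`
centered at a point of the unit sphere. -/
def Tw : ℝ :=
  sInf {r : ℝ | 0 < r ∧ ∃ x : X, ‖x‖ = 1 ∧ ∃ W : Set X, IsRelWeakOpen X W ∧
    W ⊆ closedBall x r}

/-- The convex combination `∑ i, l i • W i` of the sets `W i` (the set of all sums
`∑ i, l i • w i` with `w i ∈ W i`). -/
def comboSet {n : ℕ} (l : Fin n → ℝ) (W : Fin n → Set X) : Set X :=
  {z : X | ∃ w : Fin n → X, (∀ i, w i ∈ W i) ∧ z = ∑ i, l i • w i}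

/-- The Daugavet index of thickness `𝒯ᶜᶜ(X)`: the infimum of all `r > 0` such that some convex
combination of nonempty relatively weakly open subsets of the closed unit ball is contained in a
closed ball of radius `r` centered at a point of the unit sphere. -/
def Tcc : ℝ :=
  sInf {r : ℝ | 0 < r ∧ ∃ x : X, ‖x‖ = 1 ∧ ∃ (n : ℕ) (l : Fin n → ℝ) (W : Fin n → Set X),
    (∀ i, 0 ≤ l i) ∧ (∑ i, l i) = 1 ∧ (∀ i, IsRelWeakOpen X (W i)) ∧
    comboSet X l W ⊆ closedBall x r}

/-- `X` has the Daugavet property: for every `x` in the unit sphere, every `ε > 0` and every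
slice `S` of the closed unit ball there exists `y ∈ S` with `‖x - y‖ ≥ 2 - ε`. -/
def DaugavetProperty : Prop :=
  ∀ x : X, ‖x‖ = 1 → ∀ ε > (0 : ℝ), ∀ S : Set X, IsSlice X S → ∃ y ∈ S, 2 - ε ≤ ‖x - y‖

/-!
Bourgain's lemma says that every nonempty relatively weakly open subset `W` of `B_X` contains a
convex combination of slices; since slices are themselves relatively weakly open and a convex
combination of convex combinations of slices is again one, the two infima range over the same
radii. To prove Bourgain's lemma, shrink `W` to a basic weak neighbourhood
`B_X ∩ T⁻¹(ball (T x₀) δ)` with `T : X → ℝ^I`, `I` finite, and work in the compact convex set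
`K = closure (T B_X)`. An extreme point `e` of `K` lies outside the compact convex hull of
`K \ ball e r`, so Hahn–Banach separates them by a slice of `K` inside `ball e r`. By Krein–Milman,
`T x₀` is close to a convex combination of extreme points, and the preimages under `T` of the small
slices around them are slices of `B_X` whose convex combination lands in `W`.
-/

section FiniteDimensional

variable {E : Type*} [NormedAddCommGroup E] [NormedSpace ℝ E] [FiniteDimensional ℝ E]

-- By Carathéodory, the hull is the image of `stdSimplex × A^(finrank + 1)` under `∑ wᵢ • zᵢ`.
theorem isCompact_convexHull {A : Set E} (hA : IsCompact A) : IsCompact (convexHull ℝ A) := by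
  classical
  rcases A.eq_empty_or_nonempty with rfl | ⟨a₀, ha₀⟩
  · simp
  set n := Module.finrank ℝ E + 1
  let φ : (Fin n → ℝ) × (Fin n → E) → E := fun p => ∑ j, p.1 j • p.2 j
  have hφ : Continuous φ := by fun_prop
  suffices convexHull ℝ A = φ '' (stdSimplex ℝ (Fin n) ×ˢ Set.pi univ fun _ => A) from
    this ▸ ((isCompact_stdSimplex _ _).prod (isCompact_univ_pi fun _ => hA)).image hφ
  refine Subset.antisymm (fun x hx => ?_) ?_
  · obtain ⟨ι, _, z, w, hzA, hz, hw₀, hw₁, rfl⟩ := eq_pos_convex_span_of_mem_convexHull hx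
    have hcard : Fintype.card ι ≤ Fintype.card (Fin n) := by
      simpa using hz.card_le_finrank_succ.trans (Nat.succ_le_succ (Submodule.finrank_le _))
    obtain ⟨e⟩ := Function.Embedding.nonempty_of_card_le hcard
    refine ⟨(Function.extend e w 0, Function.extend e z fun _ => a₀), ⟨⟨fun j => ?_, ?_⟩, ?_⟩, ?_⟩
    · show 0 ≤ Function.extend e w 0 j
      rw [Function.extend_def]
      split_ifs
      exacts [(hw₀ _).le, le_rfl]
    · rw [← hw₁, Fintype.sum_of_injective e e.injective]
      · exact fun j hj => by simp [Function.extend_apply' _ _ _ hj]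
      · exact fun i => (e.injective.extend_apply _ _ _).symm
    · intro j _
      show Function.extend e z (fun _ => a₀) j ∈ A
      rw [Function.extend_def]
      split_ifs
      exacts [hzA (mem_range_self _), ha₀]
    · refine (Fintype.sum_of_injective e e.injective _ _ (fun j hj => ?_) fun i => ?_).symm
      · simp [Function.extend_apply' _ _ _ hj]
      · simp [e.injective.extend_apply]
  · rintro _ ⟨⟨w, z⟩, ⟨⟨hw₀, hw₁⟩, hz⟩, rfl⟩
    exact mem_convexHull_of_exists_fintype w z hw₀ hw₁ (fun i => hz i (mem_univ i)) rfl

def HasSliceInBall (K : Set E) (q : E) (δ : ℝ) : Prop :=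
  ∃ (g : E →L[ℝ] ℝ) (s : ℝ), (∃ k ∈ K, s < g k) ∧ {k ∈ K | s < g k} ⊆ ball q δ

theorem hasSliceInBall_of_mem_extremePoints {K : Set E} (hK : IsCompact K) (hKc : Convex ℝ K)
    {e : E} (he : e ∈ K.extremePoints ℝ) {δ : ℝ} (hδ : 0 < δ) : HasSliceInBall K e δ := by
  have heA : e ∉ convexHull ℝ (K \ ball e δ) := fun h =>
    (hKc.mem_extremePoints_iff_mem_sdiff_convexHull_sdiff.1 he).2 <|
      convexHull_mono (sdiff_subset_sdiff_right (singleton_subset_iff.2 (mem_ball_self hδ))) h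
  obtain ⟨g, s, hgA, hge⟩ := geometric_hahn_banach_closed_point (convex_convexHull ℝ _)
    (isCompact_convexHull (hK.diff isOpen_ball)).isClosed heA
  exact ⟨g, s, ⟨e, he.1, hge⟩, fun k ⟨hk, hsk⟩ =>
    by_contra fun hkδ => (hgA k (subset_convexHull ℝ _ ⟨hk, hkδ⟩)).not_gt hsk⟩

theorem subset_closure_convexHull_setOf_hasSliceInBall {K : Set E} (hK : IsCompact K)
    (hKc : Convex ℝ K) {δ : ℝ} (hδ : 0 < δ) :
    K ⊆ closure (convexHull ℝ {q | HasSliceInBall K q δ}) := by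
  conv_lhs => rw [← closure_convexHull_extremePoints hK hKc]
  exact closure_mono <| convexHull_mono fun e he =>
    hasSliceInBall_of_mem_extremePoints hK hKc he hδ

end FiniteDimensional

theorem dist_sum_smul_lt {E ι : Type*} [SeminormedAddCommGroup E] [NormedSpace ℝ E] [Fintype ι]
    {w : ι → ℝ} (hw₀ : ∀ i, 0 ≤ w i) (hw₁ : ∑ i, w i = 1) {a b : ι → E} {δ : ℝ}
    (hab : ∀ i, dist (a i) (b i) < δ) : dist (∑ i, w i • a i) (∑ i, w i • b i) < δ := by
  have := (convex_ball (0 : E) δ).sum_mem (fun i _ => hw₀ i) hw₁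
    fun i _ => mem_ball_zero_iff.2 (by simpa [dist_eq_norm] using hab i)
  simpa [dist_eq_norm, ← Finset.sum_sub_distrib, ← smul_sub] using this

def ContainsConvexCombo (P : Set X → Prop) (A : Set X) : Prop :=
  ∃ (n : ℕ) (l : Fin n → ℝ) (S : Fin n → Set X),
    (∀ i, 0 ≤ l i) ∧ ∑ i, l i = 1 ∧ (∀ i, P (S i)) ∧ comboSet X l S ⊆ A

variable {X}

theorem ContainsConvexCombo.mono {P : Set X → Prop} {A B : Set X}
    (h : ContainsConvexCombo X P A) (hAB : A ⊆ B) : ContainsConvexCombo X P B :=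
  let ⟨n, l, S, hl₀, hl₁, hS, hSA⟩ := h
  ⟨n, l, S, hl₀, hl₁, hS, hSA.trans hAB⟩

theorem containsConvexCombo_of_fintype {P : Set X → Prop} {A : Set X} {ι : Type*} [Fintype ι]
    (l : ι → ℝ) (S : ι → Set X) (hl₀ : ∀ i, 0 ≤ l i) (hl₁ : ∑ i, l i = 1) (hS : ∀ i, P (S i))
    (hA : ∀ y : ι → X, (∀ i, y i ∈ S i) → ∑ i, l i • y i ∈ A) : ContainsConvexCombo X P A := by
  let e := Fintype.equivFin ι
  refine ⟨_, l ∘ e.symm, S ∘ e.symm, fun _ => hl₀ _, by simpa [e.symm.sum_comp l] using hl₁,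
    fun _ => hS _, ?_⟩
  rintro _ ⟨y, hy, rfl⟩
  simpa [← e.symm.sum_comp] using hA (y ∘ e) fun i => by simpa using hy (e i)

theorem containsConvexCombo_comboSet {P : Set X → Prop} {n : ℕ} {l : Fin n → ℝ}
    {W : Fin n → Set X} (hl₀ : ∀ i, 0 ≤ l i) (hl₁ : ∑ i, l i = 1)
    (hW : ∀ i, ContainsConvexCombo X P (W i)) : ContainsConvexCombo X P (comboSet X l W) := by
  choose m μ S hμ₀ hμ₁ hS hSW using hW
  refine containsConvexCombo_of_fintype (fun p : Σ i, Fin (m i) => l p.1 * μ p.1 p.2)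
    (fun p => S p.1 p.2) (fun p => mul_nonneg (hl₀ _) (hμ₀ _ _)) ?_ (fun p => hS _ _)
    fun y hy => ⟨fun i => ∑ j, μ i j • y ⟨i, j⟩, fun i => hSW i ⟨_, fun j => hy ⟨i, j⟩, rfl⟩, ?_⟩
  · simp [Fintype.sum_sigma, ← Finset.mul_sum, hμ₁, hl₁]
  · simp [Fintype.sum_sigma, Finset.smul_sum, mul_smul]

theorem isWeaklyOpen_setOf_lt (f : X →L[ℝ] ℝ) (c : ℝ) : IsWeaklyOpen X {y | c < f y} := by
  rw [IsWeaklyOpen, (toWeakSpace ℝ X).image_eq_preimage_symm]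
  exact isOpen_lt continuous_const (WeakBilin.eval_continuous _ f)

theorem IsWeaklyOpen.exists_preimage_ball_subset {U : Set X} (hU : IsWeaklyOpen X U) {x : X}
    (hx : x ∈ U) : ∃ (I : Finset (X →L[ℝ] ℝ)) (δ : ℝ), 0 < δ ∧
      ContinuousLinearMap.pi (fun f : I => (f : X →L[ℝ] ℝ)) ⁻¹'
        ball (ContinuousLinearMap.pi (fun f : I => (f : X →L[ℝ] ℝ)) x) δ ⊆ U := by
  obtain ⟨V, hV, hVU⟩ := isOpen_induced_iff.1 hU
  have hVU' : ∀ y, (fun f : X →L[ℝ] ℝ => f y) ∈ V ↔ y ∈ U := fun y =>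
    (Set.ext_iff.1 hVU (toWeakSpace ℝ X y)).trans (toWeakSpace ℝ X).injective.mem_set_image
  obtain ⟨I, u, hu, hIu⟩ := isOpen_pi_iff.1 hV _ ((hVU' x).2 hx)
  obtain ⟨δ, hδ, hδu⟩ := Metric.isOpen_iff.1
    (isOpen_set_pi (s := fun f : I => u f) finite_univ fun f _ => (hu f f.2).1)
    (ContinuousLinearMap.pi (fun f : I => (f : X →L[ℝ] ℝ)) x) fun f _ => (hu f f.2).2
  exact ⟨I, δ, hδ, fun y hy => (hVU' y).1 <| hIu fun f hf => hδu hy ⟨f, hf⟩ (mem_univ _)⟩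

theorem isSlice_closedBall [Nontrivial X] : IsSlice X (closedBall 0 1) := by
  obtain ⟨x, hx⟩ := exists_ne (0 : X)
  obtain ⟨f, hf, -⟩ := exists_dual_vector ℝ x (norm_ne_zero_iff.2 hx)
  refine ⟨f, hf, 3, by norm_num, Set.ext fun y => ⟨fun hy => ⟨hy, ?_⟩, And.left⟩⟩
  have : |f y| ≤ 1 := by
    simpa [hf] using (f.le_opNorm y).trans (by simpa [hf] using hy)
  linarith [neg_abs_le (f y)]

theorem isSlice_of_nonempty [Nontrivial X] (h : X →L[ℝ] ℝ) (s : ℝ)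
    (hne : ∃ y ∈ closedBall (0 : X) 1, s < h y) : IsSlice X {y ∈ closedBall 0 1 | s < h y} := by
  obtain ⟨y₀, hy₀, hsy₀⟩ := hne
  rcases eq_or_ne h 0 with rfl | hh
  · convert isSlice_closedBall (X := X) using 1
    ext y
    simp [show s < 0 by simpa using hsy₀]
  have hpos : 0 < ‖h‖ := norm_pos_iff.2 hh
  have hs : s < ‖h‖ := hsy₀.trans_le <| (le_abs_self _).trans <| (h.le_opNorm y₀).trans <|
    mul_le_of_le_one_right hpos.le (mem_closedBall_zero_iff.1 hy₀)
  refine ⟨‖h‖⁻¹ • h, by simp [norm_smul, hpos.ne'], 1 - s / ‖h‖, by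
    linarith [(div_lt_one hpos).2 hs], ?_⟩
  ext y
  simp [sliceSet, div_lt_iff₀ hpos, inv_mul_eq_div, div_mul_cancel₀ _ hpos.ne']

theorem IsSlice.isRelWeakOpen {S : Set X} (hS : IsSlice X S) : IsRelWeakOpen X S := by
  obtain ⟨f, hf, α, hα, rfl⟩ := hS
  refine ⟨?_, _, isWeaklyOpen_setOf_lt f (1 - α), rfl⟩
  obtain ⟨y, hy, hfy⟩ := f.exists_lt_apply_of_lt_opNorm (r := 1 - α) (by linarith)
  rcases lt_abs.1 hfy with hfy | hfy
  · exact ⟨y, mem_closedBall_zero_iff.2 hy.le, hfy⟩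
  · exact ⟨-y, by simpa using hy.le, by simpa using hfy⟩

theorem IsRelWeakOpen.containsConvexCombo_isSlice [Nontrivial X] {W : Set X}
    (hW : IsRelWeakOpen X W) : ContainsConvexCombo X (IsSlice X) W := by
  obtain ⟨⟨x₀, hx₀⟩, U, hU, rfl⟩ := hW
  obtain ⟨hx₀B, hx₀U⟩ := hx₀
  obtain ⟨I, δ, hδ, hTU⟩ := hU.exists_preimage_ball_subset hx₀U
  set T := ContinuousLinearMap.pi fun f : I => (f : X →L[ℝ] ℝ)
  set K := closure (T '' closedBall 0 1)
  have hTK : ∀ y ∈ closedBall (0 : X) 1, T y ∈ K := fun y hy =>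
    subset_closure (mem_image_of_mem T hy)
  have hK : IsCompact K := (T.lipschitz.isBounded_image isBounded_closedBall).isCompact_closure
  have hKc : Convex ℝ K := ((convex_closedBall 0 1).linear_image T.toLinearMap).closure
  obtain ⟨p, hp, hx₀p⟩ := Metric.mem_closure_iff.1
    (subset_closure_convexHull_setOf_hasSliceInBall hK hKc (half_pos hδ) (hTK x₀ hx₀B))
    (δ / 2) (half_pos hδ)
  obtain ⟨ι, _, w, q, hw₀, hw₁, hq, rfl⟩ := mem_convexHull_iff_exists_fintype.1 hp
  choose g s hne hsmall using hq
  have hslice : ∀ i, ∃ y ∈ closedBall (0 : X) 1, s i < g i (T y) := fun i => by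
    obtain ⟨k, hk, hsk⟩ := hne i
    obtain ⟨_, hsk', y, hy, rfl⟩ :=
      mem_closure_iff.1 hk _ (isOpen_lt continuous_const (g i).continuous) hsk
    exact ⟨y, hy, hsk'⟩
  refine containsConvexCombo_of_fintype w (fun i => {y ∈ closedBall 0 1 | s i < (g i).comp T y})
    hw₀ hw₁ (fun i => isSlice_of_nonempty _ _ (hslice i)) fun y hy => ⟨?_, hTU ?_⟩
  · exact (convex_closedBall 0 1).sum_mem (fun i _ => hw₀ i) hw₁ fun i _ => (hy i).1
  · have hyq : ∀ i, dist (T (y i)) (q i) < δ / 2 := fun i => hsmall i ⟨hTK _ (hy i).1, (hy i).2⟩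
    rw [mem_preimage, mem_ball, map_sum]
    simp only [map_smul]
    calc dist (∑ i, w i • T (y i)) (T x₀)
        ≤ dist (∑ i, w i • T (y i)) (∑ i, w i • q i) + dist (∑ i, w i • q i) (T x₀) :=
          dist_triangle _ _ _
      _ < δ / 2 + δ / 2 := add_lt_add (dist_sum_smul_lt hw₀ hw₁ hyq) (by rwa [dist_comm])
      _ = δ := add_halves δ

theorem stmt_1_general (X : Type*) [NormedAddCommGroup X] [NormedSpace ℝ X] :
    Tcc X =
      sInf {r : ℝ | 0 < r ∧ ∃ x : X, ‖x‖ = 1 ∧ ∃ (n : ℕ) (l : Fin n → ℝ) (S : Fin n → Set X),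
        (∀ i, 0 ≤ l i) ∧ (∑ i, l i) = 1 ∧ (∀ i, IsSlice X (S i)) ∧
        comboSet X l S ⊆ closedBall x r} := by
  rw [Tcc]
  congr 1
  ext r
  constructor
  · rintro ⟨hr, x, hx, n, l, W, hl₀, hl₁, hW, hWx⟩
    have : Nontrivial X := nontrivial_of_ne x 0 (by rintro rfl; simp at hx)
    exact ⟨hr, x, hx, (containsConvexCombo_comboSet hl₀ hl₁ fun i =>
      (hW i).containsConvexCombo_isSlice).mono hWx⟩
  · rintro ⟨hr, x, hx, n, l, S, hl₀, hl₁, hS, hSx⟩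
    exact ⟨hr, x, hx, n, l, S, hl₀, hl₁, fun i => (hS i).isRelWeakOpen, hSx⟩

theorem stmt_1 (X : Type*) [NormedAddCommGroup X] [NormedSpace ℝ X] [CompleteSpace X]
    [Nontrivial X] :
    Tcc X =
      sInf {r : ℝ | 0 < r ∧ ∃ x : X, ‖x‖ = 1 ∧ ∃ (n : ℕ) (l : Fin n → ℝ) (S : Fin n → Set X),
        (∀ i, 0 ≤ l i) ∧ (∑ i, l i) = 1 ∧ (∀ i, IsSlice X (S i)) ∧
        comboSet X l S ⊆ closedBall x r} :=
  stmt_1_general X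
end
end

section
/- Let X and Y be real Banach spaces, let N be an absolute normalized norm on ℝ², and let γ > 0 be such that N(a,b) ≥ γ(|a| + |b|) for all (a,b) ∈ ℝ². Then 𝒯^s(X ⊕_N Y) ≥ 2γ(min{𝒯^s(X), 𝒯^s(Y)} − 1). -/
/-!
Decompose a norm-one functional on `X ⊕_N Y` as `f (x, y) = g x + h y` and take a unit vector
`(x₁, y₁)` with `f (x₁, y₁)` close to `1`; then `a = ‖x₁‖`, `b = ‖y₁‖` satisfy `N a b = 1`. If
`ρ + 1 < min (𝒯ˢ X) (𝒯ˢ Y)`, the slices of `g` and `h` contain points `x`, `y` at distance more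
than `ρ + 1` from the directions of the components `x₀`, `y₀` of the centre, and `(a x, b y)` lies
in the slice of `f`. Comparing `a x - x₀` with `max a ‖x₀‖ • (x - x₀ / ‖x₀‖)` gives
`‖a x - x₀‖ ≥ ρ (a + ‖x₀‖)`, so the distance from `(a x, b y)` to `(x₀, y₀)` is at least
`γ ρ (a + b + ‖x₀‖ + ‖y₀‖) ≥ 2 γ ρ`, because `N s t ≤ |s| + |t|` forces `a + b ≥ 1` and
`‖x₀‖ + ‖y₀‖ ≥ 1`.
-/

open Metric Set

noncomputable section

variable (X : Type*) [NormedAddCommGroup X] [NormedSpace ℝ X]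

structure IsAbsNormalizedSeminorm (N : ℝ → ℝ → ℝ) : Prop where
  triangle : ∀ a b c d : ℝ, N (a + c) (b + d) ≤ N a b + N c d
  homog : ∀ t a b : ℝ, N (t * a) (t * b) = |t| * N a b
  apply_abs : ∀ a b : ℝ, N a b = N |a| |b|
  one_zero : N 1 0 = 1
  zero_one : N 0 1 = 1

namespace IsAbsNormalizedSeminorm

variable {N : ℝ → ℝ → ℝ}

theorem swap (hN : IsAbsNormalizedSeminorm N) : IsAbsNormalizedSeminorm fun a b => N b a where
  triangle a b c d := hN.triangle b a d c
  homog t a b := hN.homog t b a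
  apply_abs a b := hN.apply_abs b a
  one_zero := hN.zero_one
  zero_one := hN.one_zero

theorem apply_zero_right (hN : IsAbsNormalizedSeminorm N) (t : ℝ) : N t 0 = |t| := by
  simpa [hN.one_zero] using hN.homog t 1 0

theorem apply_zero_left (hN : IsAbsNormalizedSeminorm N) (t : ℝ) : N 0 t = |t| :=
  hN.swap.apply_zero_right t

theorem mono_left (hN : IsAbsNormalizedSeminorm N) {a b c : ℝ} (h : |a| ≤ c) :
    N a b ≤ N c b := by
  rcases ((abs_nonneg a).trans h).eq_or_lt with hc | hc
  · obtain rfl : a = 0 := abs_nonpos_iff.mp (h.trans hc.ge)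
    rw [← hc]
  have hneg : N (-c) b = N c b := by rw [hN.apply_abs, abs_neg, ← hN.apply_abs]
  have hca : 0 ≤ c + a := by linarith [neg_abs_le a]
  have hac : 0 ≤ c - a := by linarith [le_abs_self a]
  -- `2c • (a, b) = (c + a) • (c, b) + (c - a) • (-c, b)`
  refine le_of_mul_le_mul_left ?_ (by positivity : 0 < 2 * c)
  calc 2 * c * N a b = N (2 * c * a) (2 * c * b) := by
        rw [hN.homog, abs_of_pos (by positivity)]
    _ = N ((c + a) * c + (c - a) * -c) ((c + a) * b + (c - a) * b) := by congr 1 <;> ring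
    _ ≤ N ((c + a) * c) ((c + a) * b) + N ((c - a) * -c) ((c - a) * b) := hN.triangle ..
    _ = 2 * c * N c b := by
        rw [hN.homog, hN.homog, hneg, abs_of_nonneg hca, abs_of_nonneg hac]; ring

theorem mono_right (hN : IsAbsNormalizedSeminorm N) {a b d : ℝ} (h : |b| ≤ d) :
    N a b ≤ N a d :=
  hN.swap.mono_left h

theorem mono (hN : IsAbsNormalizedSeminorm N) {a b c d : ℝ} (hac : |a| ≤ c) (hbd : |b| ≤ d) :
    N a b ≤ N c d :=
  (hN.mono_left hac).trans (hN.mono_right hbd)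

theorem abs_le_left (hN : IsAbsNormalizedSeminorm N) (a b : ℝ) : |a| ≤ N a b :=
  calc |a| = N |a| 0 := by rw [hN.apply_zero_right, abs_abs]
    _ ≤ N |a| |b| := hN.mono_right (by rw [abs_zero]; exact abs_nonneg b)
    _ = N a b := (hN.apply_abs a b).symm

theorem abs_le_right (hN : IsAbsNormalizedSeminorm N) (a b : ℝ) : |b| ≤ N a b :=
  hN.swap.abs_le_left b a

theorem le_abs_add_abs (hN : IsAbsNormalizedSeminorm N) (a b : ℝ) : N a b ≤ |a| + |b| := by
  simpa [hN.apply_zero_right, hN.apply_zero_left] using hN.triangle a 0 0 b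

end IsAbsNormalizedSeminorm

section Thickness

variable {E : Type*} [NormedAddCommGroup E] [NormedSpace ℝ E]

theorem Ts_le_of_sliceSet_subset {r : ℝ} (hr : 0 < r) {x : E} (hx : ‖x‖ = 1)
    {f : E →L[ℝ] ℝ} (hf : ‖f‖ = 1) {α : ℝ} (hα : 0 < α)
    (h : sliceSet E f α ⊆ closedBall x r) : Ts E ≤ r :=
  csInf_le ⟨0, fun _ hr => hr.1.le⟩ ⟨hr, x, hx, _, ⟨f, hf, α, hα, rfl⟩, h⟩

theorem sliceSet_subset_closedBall_two {x : E} (hx : ‖x‖ = 1) (f : E →L[ℝ] ℝ) (α : ℝ) :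
    sliceSet E f α ⊆ closedBall x 2 := fun y hy => by
  rw [mem_closedBall, dist_eq_norm]
  linarith [norm_sub_le y x, mem_closedBall_zero_iff.1 hy.1]

theorem Ts_le_two [Nontrivial E] : Ts E ≤ 2 := by
  obtain ⟨x, hx⟩ := exists_norm_eq E zero_le_one
  obtain ⟨f, hf, -⟩ := exists_dual_vector' ℝ x
  exact Ts_le_of_sliceSet_subset two_pos hx hf one_pos (sliceSet_subset_closedBall_two hx f 1)

theorem le_Ts [Nontrivial E] {t : ℝ}
    (h : ∀ r > 0, ∀ x : E, ‖x‖ = 1 → ∀ f : E →L[ℝ] ℝ, ‖f‖ = 1 → ∀ α > 0,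
      sliceSet E f α ⊆ closedBall x r → t ≤ r) :
    t ≤ Ts E := by
  obtain ⟨x, hx⟩ := exists_norm_eq E zero_le_one
  obtain ⟨f, hf, -⟩ := exists_dual_vector' ℝ x
  refine le_csInf ⟨2, two_pos, x, hx, _, ⟨f, hf, 1, one_pos, rfl⟩,
    sliceSet_subset_closedBall_two hx f 1⟩ ?_
  rintro r ⟨hr, x, hx, _, ⟨f, hf, α, hα, rfl⟩, hsub⟩
  exact h r hr x hx f hf α hα hsub

theorem exists_lt_norm_sub_of_lt_Ts {ρ : ℝ} (hρ : 0 < ρ) (h : ρ < Ts E) {u : E} (hu : ‖u‖ = 1)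
    {f : E →L[ℝ] ℝ} (hf : ‖f‖ = 1) {α : ℝ} (hα : 0 < α) :
    ∃ x ∈ sliceSet E f α, ρ < ‖x - u‖ := by
  by_contra! hfar
  exact h.not_ge <| Ts_le_of_sliceSet_subset hρ hu hf hα fun x hx =>
    mem_closedBall_iff_norm.2 (hfar x hx)

theorem exists_lt_apply_lt_norm_sub_of_lt_Ts {ρ : ℝ} (hρ : 0 < ρ) (h : ρ < Ts E)
    (g : E →L[ℝ] ℝ) {δ : ℝ} (hδ : 0 < δ) {u : E} (hu : ‖u‖ = 1) :
    ∃ x : E, ‖x‖ ≤ 1 ∧ ‖g‖ - δ < g x ∧ ρ < ‖x - u‖ := by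
  by_cases hg : g = 0
  · obtain ⟨f, hf, -⟩ := exists_dual_vector ℝ u (by rw [hu]; exact one_ne_zero)
    obtain ⟨x, hx, hfar⟩ := exists_lt_norm_sub_of_lt_Ts hρ h hu hf one_pos
    exact ⟨x, mem_closedBall_zero_iff.1 hx.1, by simpa [hg] using hδ, hfar⟩
  have hg0 : 0 < ‖g‖ := norm_pos_iff.2 hg
  obtain ⟨x, ⟨hx, hgx⟩, hfar⟩ :=
    exists_lt_norm_sub_of_lt_Ts hρ h hu (norm_smul_inv_norm (𝕜 := ℝ) hg) (div_pos hδ hg0)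
  refine ⟨x, mem_closedBall_zero_iff.1 hx, ?_, hfar⟩
  rw [smul_apply, smul_eq_mul, RCLike.ofReal_real_eq_id, id, inv_mul_eq_div,
    sub_lt_iff_lt_add, ← add_div, one_lt_div hg0] at hgx
  linarith

theorem mul_add_le_norm_smul_sub_smul {x u : E} (hx : ‖x‖ ≤ 1) (hu : ‖u‖ = 1) {c p ρ : ℝ}
    (hc : 0 ≤ c) (hp : 0 ≤ p) (hρ : ρ ≤ 1) (hfar : ρ + 1 ≤ ‖x - u‖) :
    ρ * (c + p) ≤ ‖c • x - p • u‖ := by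
  have hc' : c * ‖x - u‖ ≤ ‖c • x - p • u‖ + |c - p| := by
    calc c * ‖x - u‖ = ‖c • (x - u)‖ := by rw [norm_smul, Real.norm_of_nonneg hc]
      _ = ‖(c • x - p • u) - (c - p) • u‖ := by congr 1; module
      _ ≤ ‖c • x - p • u‖ + |c - p| := by
          simpa [norm_smul, hu] using norm_sub_le (c • x - p • u) ((c - p) • u)
  have hp' : p * ‖x - u‖ ≤ ‖c • x - p • u‖ + |c - p| := by
    calc p * ‖x - u‖ = ‖p • (x - u)‖ := by rw [norm_smul, Real.norm_of_nonneg hp]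
      _ = ‖(c • x - p • u) - (c - p) • x‖ := by congr 1; module
      _ ≤ ‖c • x - p • u‖ + ‖(c - p) • x‖ := norm_sub_le _ _
      _ ≤ ‖c • x - p • u‖ + |c - p| := by
          rw [norm_smul, Real.norm_eq_abs]; gcongr; exact mul_le_of_le_one_right (abs_nonneg _) hx
  rcases le_total c p with hcp | hpc
  · rw [abs_of_nonpos (sub_nonpos.2 hcp)] at hp'
    nlinarith
  · rw [abs_of_nonneg (sub_nonneg.2 hpc)] at hc'
    nlinarith

theorem exists_norm_eq_one_smul_eq [Nontrivial E] (v : E) : ∃ u : E, ‖u‖ = 1 ∧ ‖v‖ • u = v := by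
  by_cases hv : v = 0
  · obtain ⟨u, hu⟩ := exists_norm_eq E zero_le_one
    exact ⟨u, hu, by simp [hv]⟩
  · exact ⟨‖v‖⁻¹ • v, norm_smul_inv_norm hv, smul_inv_smul₀ (norm_ne_zero_iff.2 hv) v⟩

theorem exists_lt_apply_mul_le_norm_smul_sub [Nontrivial E] {ρ : ℝ} (hρ : 0 < ρ)
    (h : ρ + 1 < Ts E) (g : E →L[ℝ] ℝ) {δ : ℝ} (hδ : 0 < δ) (v : E) {c : ℝ} (hc : 0 ≤ c) :
    ∃ x : E, ‖x‖ ≤ 1 ∧ ‖g‖ - δ < g x ∧ ρ * (c + ‖v‖) ≤ ‖c • x - v‖ := by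
  obtain ⟨u, hu, hvu⟩ := exists_norm_eq_one_smul_eq v
  have hρ1 : ρ ≤ 1 := by linarith [Ts_le_two (E := E)]
  obtain ⟨x, hx, hgx, hfar⟩ :=
    exists_lt_apply_lt_norm_sub_of_lt_Ts (by linarith) h g hδ hu
  refine ⟨x, hx, hgx, ?_⟩
  simpa only [hvu] using mul_add_le_norm_smul_sub_smul hx hu hc (norm_nonneg v) hρ1 hfar.le

theorem exists_norm_eq_one_lt_apply [Nontrivial E] (f : E →L[ℝ] ℝ) {r : ℝ} (hr : r < ‖f‖) :
    ∃ x : E, ‖x‖ = 1 ∧ r < f x := by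
  obtain ⟨x, hx, hfx⟩ : ∃ x : E, ‖x‖ = 1 ∧ r < |f x| := by
    rcases lt_or_ge r 0 with hr0 | hr0
    · obtain ⟨x, hx⟩ := exists_norm_eq E zero_le_one
      exact ⟨x, hx, hr0.trans_le (abs_nonneg _)⟩
    · lift r to NNReal using hr0
      obtain ⟨x, hx, hfx⟩ := f.exists_nnnorm_eq_one_lt_apply_of_lt_opNNNorm hr
      exact ⟨x, congrArg NNReal.toReal hx, hfx⟩
  rcases le_or_gt 0 (f x) with hpos | hneg
  · exact ⟨x, hx, by rwa [abs_of_nonneg hpos] at hfx⟩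
  · exact ⟨-x, by rwa [norm_neg], by rwa [map_neg, ← abs_of_neg hneg]⟩

end Thickness

section AbsoluteSum

variable {X Y Z : Type*} [NormedAddCommGroup X] [NormedSpace ℝ X] [NormedAddCommGroup Y]
  [NormedSpace ℝ Y] [NormedAddCommGroup Z] [NormedSpace ℝ Z] {N : ℝ → ℝ → ℝ}
  {e : Z ≃ₗ[ℝ] X × Y}

theorem norm_symm_apply_of_norm_eq (hZ : ∀ z : Z, ‖z‖ = N ‖(e z).1‖ ‖(e z).2‖) (x : X) (y : Y) :
    ‖e.symm (x, y)‖ = N ‖x‖ ‖y‖ := by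
  rw [hZ, e.apply_symm_apply]

theorem exists_apply_eq_add_of_norm_eq (hN : IsAbsNormalizedSeminorm N)
    (hZ : ∀ z : Z, ‖z‖ = N ‖(e z).1‖ ‖(e z).2‖) (f : Z →L[ℝ] ℝ) :
    ∃ (g : X →L[ℝ] ℝ) (h : Y →L[ℝ] ℝ), ∀ z, f z = g (e z).1 + h (e z).2 := by
  refine ⟨(f.toLinearMap ∘ₗ e.symm.toLinearMap ∘ₗ LinearMap.inl ℝ X Y).mkContinuous ‖f‖
      fun x => (f.le_opNorm _).trans_eq ?_,
    (f.toLinearMap ∘ₗ e.symm.toLinearMap ∘ₗ LinearMap.inr ℝ X Y).mkContinuous ‖f‖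
      fun y => (f.le_opNorm _).trans_eq ?_, fun z => ?_⟩
  · simp [norm_symm_apply_of_norm_eq hZ, hN.apply_zero_right]
  · simp [norm_symm_apply_of_norm_eq hZ, hN.apply_zero_left]
  · simp [← map_add]

theorem norm_symm_smul_le (hN : IsAbsNormalizedSeminorm N)
    (hZ : ∀ z : Z, ‖z‖ = N ‖(e z).1‖ ‖(e z).2‖) {x : X} {y : Y} (hx : ‖x‖ ≤ 1) (hy : ‖y‖ ≤ 1)
    (a b : ℝ) : ‖e.symm (a • x, b • y)‖ ≤ N a b := by
  rw [norm_symm_apply_of_norm_eq hZ, norm_smul, norm_smul, Real.norm_eq_abs, Real.norm_eq_abs,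
    hN.apply_abs a b]
  refine hN.mono ?_ ?_ <;> rw [abs_of_nonneg (by positivity)]
  exacts [mul_le_of_le_one_right (abs_nonneg a) hx, mul_le_of_le_one_right (abs_nonneg b) hy]

theorem symm_smul_mem_sliceSet (hN : IsAbsNormalizedSeminorm N)
    (hZ : ∀ z : Z, ‖z‖ = N ‖(e z).1‖ ‖(e z).2‖) {f : Z →L[ℝ] ℝ} {g : X →L[ℝ] ℝ}
    {h : Y →L[ℝ] ℝ} (hfgh : ∀ z, f z = g (e z).1 + h (e z).2) {a b δ α : ℝ} (ha : 0 ≤ a)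
    (hb : 0 ≤ b) (hab : N a b = 1) (hgh : 1 - δ < a * ‖g‖ + b * ‖h‖) (hδ : 0 ≤ δ)
    (hδα : 3 * δ ≤ α) {x : X} (hx : ‖x‖ ≤ 1) (hgx : ‖g‖ - δ < g x) {y : Y} (hy : ‖y‖ ≤ 1) (hhy : ‖h‖ - δ < h y) :
    e.symm (a • x, b • y) ∈ sliceSet Z f α := by
  refine ⟨mem_closedBall_zero_iff.2 ((norm_symm_smul_le hN hZ hx hy a b).trans hab.le), ?_⟩
  have ha₁ : a ≤ 1 := by simpa only [abs_of_nonneg ha, hab] using hN.abs_le_left a b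
  have hb₁ : b ≤ 1 := by simpa only [abs_of_nonneg hb, hab] using hN.abs_le_right a b
  rw [hfgh, e.apply_symm_apply, map_smul, map_smul, smul_eq_mul, smul_eq_mul]
  linarith [mul_le_mul_of_nonneg_left hgx.le ha, mul_le_mul_of_nonneg_left hhy.le hb,
    mul_le_of_le_one_left hδ ha₁, mul_le_of_le_one_left hδ hb₁]

theorem two_mul_mul_le_of_sliceSet_subset_closedBall [Nontrivial X] [Nontrivial Y]
    (hN : IsAbsNormalizedSeminorm N) (hZ : ∀ z : Z, ‖z‖ = N ‖(e z).1‖ ‖(e z).2‖) {γ : ℝ}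
    (hγ : 0 ≤ γ) (hγN : ∀ a b : ℝ, γ * (|a| + |b|) ≤ N a b) {ρ : ℝ} (hρ : 0 < ρ)
    (hX : ρ + 1 < Ts X) (hY : ρ + 1 < Ts Y) {z₀ : Z} (hz₀ : ‖z₀‖ = 1) {f : Z →L[ℝ] ℝ}
    (hf : ‖f‖ = 1) {α r : ℝ} (hα : 0 < α) (hsub : sliceSet Z f α ⊆ closedBall z₀ r) :
    2 * γ * ρ ≤ r := by
  have : Nontrivial Z := nontrivial_of_ne z₀ 0 (by rw [← norm_ne_zero_iff, hz₀]; exact one_ne_zero)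
  have hδ : 0 < α / 3 := by positivity
  obtain ⟨g, h, hfgh⟩ := exists_apply_eq_add_of_norm_eq hN hZ f
  obtain ⟨z₁, hz₁, hfz₁⟩ := exists_norm_eq_one_lt_apply f (r := 1 - α / 3) (by linarith)
  set a := ‖(e z₁).1‖
  set b := ‖(e z₁).2‖
  have ha : 0 ≤ a := norm_nonneg _
  have hb : 0 ≤ b := norm_nonneg _
  have hab : N a b = 1 := (hZ z₁).symm.trans hz₁
  have hgh : 1 - α / 3 < a * ‖g‖ + b * ‖h‖ := by
    refine hfz₁.trans_le ?_
    rw [hfgh, mul_comm a, mul_comm b]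
    exact add_le_add ((le_abs_self _).trans (g.le_opNorm _)) ((le_abs_self _).trans (h.le_opNorm _))
  obtain ⟨x, hx, hgx, hdx⟩ := exists_lt_apply_mul_le_norm_smul_sub hρ hX g hδ (e z₀).1 ha
  obtain ⟨y, hy, hhy, hdy⟩ := exists_lt_apply_mul_le_norm_smul_sub hρ hY h hδ (e z₀).2 hb
  have hdist :=
    hsub (symm_smul_mem_sliceSet hN hZ hfgh ha hb hab hgh hδ.le (by linarith) hx hgx hy hhy)
  rw [mem_closedBall_iff_norm, hZ, map_sub, e.apply_symm_apply] at hdist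
  have hab₁ : 1 ≤ a + b := by
    simpa only [abs_of_nonneg ha, abs_of_nonneg hb, hab] using hN.le_abs_add_abs a b
  have hz₀₁ : 1 ≤ ‖(e z₀).1‖ + ‖(e z₀).2‖ := by
    simpa only [abs_norm, (hZ z₀).symm.trans hz₀] using hN.le_abs_add_abs ‖(e z₀).1‖ ‖(e z₀).2‖
  calc 2 * γ * ρ = γ * ρ * 2 := by ring
    _ ≤ γ * ρ * ((a + ‖(e z₀).1‖) + (b + ‖(e z₀).2‖)) := by gcongr; linarith
    _ ≤ γ * (‖a • x - (e z₀).1‖ + ‖b • y - (e z₀).2‖) := by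
        rw [mul_assoc, mul_add]; gcongr
    _ ≤ N ‖a • x - (e z₀).1‖ ‖b • y - (e z₀).2‖ := by
        simpa only [abs_norm] using hγN ‖a • x - (e z₀).1‖ ‖b • y - (e z₀).2‖
    _ ≤ r := hdist

end AbsoluteSum

theorem stmt_3_general (X Y : Type*) [NormedAddCommGroup X] [NormedSpace ℝ X]
    [Nontrivial X] [NormedAddCommGroup Y] [NormedSpace ℝ Y] [Nontrivial Y]
    (N : ℝ → ℝ → ℝ)
    (N_triangle : ∀ a b c d : ℝ, N (a + c) (b + d) ≤ N a b + N c d)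
    (N_homog : ∀ t a b : ℝ, N (t * a) (t * b) = |t| * N a b)
    (N_abs : ∀ a b : ℝ, N a b = N |a| |b|)
    (N_norm₁ : N 1 0 = 1) (N_norm₂ : N 0 1 = 1)
    (Z : Type*) [NormedAddCommGroup Z] [NormedSpace ℝ Z]
    (e : Z ≃ₗ[ℝ] X × Y) (hZ : ∀ z : Z, ‖z‖ = N ‖(e z).1‖ ‖(e z).2‖)
    (γ : ℝ) (hγ : 0 < γ) (hγN : ∀ a b : ℝ, γ * (|a| + |b|) ≤ N a b) :
    2 * γ * (min (Ts X) (Ts Y) - 1) ≤ Ts Z := by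
  have hN : IsAbsNormalizedSeminorm N := ⟨N_triangle, N_homog, N_abs, N_norm₁, N_norm₂⟩
  have : Nontrivial Z := e.toEquiv.nontrivial
  refine le_Ts fun r hr z₀ hz₀ f hf α hα hsub => ?_
  by_contra! hlt
  obtain ⟨ρ, hrρ, hρ⟩ : ∃ ρ, r / (2 * γ) < ρ ∧ ρ + 1 < min (Ts X) (Ts Y) := by
    obtain ⟨ρ, h₁, h₂⟩ := exists_between ((div_lt_iff₀' (by positivity)).2 hlt)
    exact ⟨ρ, h₁, by linarith⟩
  have hρ₀ : 0 < ρ := (div_pos hr (by positivity)).trans hrρ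
  rw [div_lt_iff₀' (by positivity)] at hrρ
  have := two_mul_mul_le_of_sliceSet_subset_closedBall hN hZ hγ.le hγN hρ₀
    (lt_min_iff.1 hρ).1 (lt_min_iff.1 hρ).2 hz₀ hf hα hsub
  linarith

theorem stmt_3 (X Y : Type*) [NormedAddCommGroup X] [NormedSpace ℝ X]
    [CompleteSpace X] [Nontrivial X] [NormedAddCommGroup Y] [NormedSpace ℝ Y]
    [CompleteSpace Y] [Nontrivial Y]
    (N : ℝ → ℝ → ℝ)
    (N_triangle : ∀ a b c d : ℝ, N (a + c) (b + d) ≤ N a b + N c d)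
    (N_homog : ∀ t a b : ℝ, N (t * a) (t * b) = |t| * N a b)
    (N_pos : ∀ a b : ℝ, N a b = 0 → a = 0 ∧ b = 0)
    (N_abs : ∀ a b : ℝ, N a b = N |a| |b|)
    (N_norm₁ : N 1 0 = 1) (N_norm₂ : N 0 1 = 1)
    (Z : Type*) [NormedAddCommGroup Z] [NormedSpace ℝ Z] [CompleteSpace Z]
    (e : Z ≃ₗ[ℝ] X × Y) (hZ : ∀ z : Z, ‖z‖ = N ‖(e z).1‖ ‖(e z).2‖)
    (γ : ℝ) (hγ : 0 < γ) (hγN : ∀ a b : ℝ, γ * (|a| + |b|) ≤ N a b) :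
    2 * γ * (min (Ts X) (Ts Y) - 1) ≤ Ts Z :=
  stmt_3_general X Y N N_triangle N_homog N_abs N_norm₁ N_norm₂ Z e hZ γ hγ hγN
end
end

section
/- Let X and Y be real Banach spaces, let N be an absolute normalized norm on ℝ², and let γ > 0 be such that N(a,b) ≥ γ(|a| + |b|) for all (a,b) ∈ ℝ². Then 𝒯(X ⊕_N Y) ≥ 2γ(min{𝒯(X), 𝒯(Y)} − 1). In particular, for 1 < p < ∞, 𝒯(X ⊕_p Y) ≥ 2^{1/p}(min{𝒯(X), 𝒯(Y)} − 1), where X ⊕_p Y is the ℓ_p-sum. -/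
open Metric Set

noncomputable section

variable (X : Type*) [NormedAddCommGroup X] [NormedSpace ℝ X]

/-!
Let `W` be a relatively weakly open subset of `B_Z`, `z ∈ S_Z`, and `s < min (𝒯(X), 𝒯(Y))`.
Pick `(w₁, w₂) ∈ W`, put `a = ‖w₁‖` and enlarge `‖w₂‖` to some `b ≤ 1` with `1 ≤ a + b` and
`N(a, b) ≤ 1`. The set of `u ∈ B_X` with `(a u, w₂) ∈ W` is relatively weakly open, so it contains a
`u` with `‖u - x‖ > s`, where `x ∈ S_X` satisfies `‖x - z₁‖ = 1 - ‖z₁‖`; then, with `u` fixed, the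
same in `Y` gives `v`. The point `(a u, b v)` lies in `W`, and since `a + b ≥ 1` and
`‖z₁‖ + ‖z₂‖ ≥ 1`, the losses `1 - a`, `1 - b`, `1 - ‖z₁‖`, `1 - ‖z₂‖` add up to at most `2`:
`‖a u - z₁‖ + ‖b v - z₂‖ > 2 s - 2`, so `‖(a u, b v) - z‖ > 2 γ (s - 1)` and `W` lies in no
ball `B(z, r)` with `r ≤ 2 γ (s - 1)`.
For `ℓ_p`, convexity of `t ↦ t ^ p` gives `γ = 2 ^ (1 / p) / 2`.
-/

structure IsAbsoluteNormalized (N : ℝ → ℝ → ℝ) : Prop where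
  triangle : ∀ a b c d : ℝ, N (a + c) (b + d) ≤ N a b + N c d
  homog : ∀ t a b : ℝ, N (t * a) (t * b) = |t| * N a b
  eq_abs : ∀ a b : ℝ, N a b = N |a| |b|
  one_zero : N 1 0 = 1
  zero_one : N 0 1 = 1

namespace IsAbsoluteNormalized

variable {N : ℝ → ℝ → ℝ} (hN : IsAbsoluteNormalized N)
include hN

theorem swap : IsAbsoluteNormalized (fun a b => N b a) where
  triangle a b c d := hN.triangle b a d c
  homog t a b := hN.homog t b a
  eq_abs a b := hN.eq_abs b a
  one_zero := hN.zero_one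
  zero_one := hN.one_zero

theorem apply_zero_right (a : ℝ) : N a 0 = |a| := by
  simpa [hN.one_zero] using hN.homog a 1 0

theorem apply_zero_left (b : ℝ) : N 0 b = |b| :=
  hN.swap.apply_zero_right b

theorem le_abs_add_abs (a b : ℝ) : N a b ≤ |a| + |b| := by
  simpa [hN.apply_zero_right, hN.apply_zero_left] using hN.triangle a 0 0 b

theorem mono_left {a a' : ℝ} (b : ℝ) (ha : 0 ≤ a) (haa : a ≤ a') : N a b ≤ N a' b := by
  rcases (ha.trans haa).eq_or_lt with rfl | ha'
  · rw [le_antisymm haa ha]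
  -- `a = t a' + (1 - t) (-a')`, and `N` is even in its first argument
  set t := (a' + a) / (2 * a')
  have hsplit : N a b ≤ N (t * a') (t * b) + N ((1 - t) * -a') ((1 - t) * b) := by
    convert hN.triangle _ _ _ _ using 2 <;> (simp only [t]; field_simp; ring)
  have ht : 0 ≤ t := by positivity
  have ht1 : 0 ≤ 1 - t := by
    rw [sub_nonneg, div_le_one (by positivity)]
    linarith
  have hneg : N (-a') b = N a' b := by rw [hN.eq_abs, abs_neg, ← hN.eq_abs]
  rw [hN.homog, hN.homog, abs_of_nonneg ht, abs_of_nonneg ht1, hneg] at hsplit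
  linarith

theorem mono_right (a : ℝ) {b b' : ℝ} (hb : 0 ≤ b) (hbb : b ≤ b') : N a b ≤ N a b' :=
  hN.swap.mono_left a hb hbb

theorem mono {a a' b b' : ℝ} (ha : 0 ≤ a) (haa : a ≤ a') (hb : 0 ≤ b) (hbb : b ≤ b') :
    N a b ≤ N a' b' :=
  (hN.mono_left b ha haa).trans (hN.mono_right a' hb hbb)

theorem abs_le_left (a b : ℝ) : |a| ≤ N a b := by
  have h := hN.mono_right |a| le_rfl (abs_nonneg b)
  rwa [hN.apply_zero_right, abs_abs, ← hN.eq_abs] at h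

theorem abs_le_right (a b : ℝ) : |b| ≤ N a b :=
  hN.swap.abs_le_left b a

theorem exists_le_one_le_add {a c : ℝ} (ha : 0 ≤ a) (hac : N a c ≤ 1) :
    ∃ b, c ≤ b ∧ 1 ≤ a + b ∧ N a b ≤ 1 := by
  refine ⟨max c (1 - a), le_max_left _ _, by linarith [le_max_right c (1 - a)], ?_⟩
  rcases max_cases c (1 - a) with ⟨h, -⟩ | ⟨h, -⟩
  · rwa [h]
  · have ha1 : a ≤ 1 := by simpa [abs_of_nonneg ha] using (hN.abs_le_left a c).trans hac
    rw [h]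
    simpa [abs_of_nonneg ha, abs_of_nonneg (sub_nonneg.2 ha1)] using hN.le_abs_add_abs a (1 - a)

end IsAbsoluteNormalized

section Vectors

variable {E : Type*} [NormedAddCommGroup E] [NormedSpace ℝ E]

theorem exists_norm_eq_one_norm_sub_eq [Nontrivial E] {z : E} (hz : ‖z‖ ≤ 1) :
    ∃ x : E, ‖x‖ = 1 ∧ ‖x - z‖ = 1 - ‖z‖ := by
  rcases eq_or_ne z 0 with rfl | hz0
  · simpa using exists_norm_eq E zero_le_one
  have hpos : 0 < ‖z‖ := norm_pos_iff.2 hz0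
  refine ⟨‖z‖⁻¹ • z, by simp [norm_smul, hpos.ne'], ?_⟩
  have hcoef : 0 ≤ ‖z‖⁻¹ - 1 := sub_nonneg.2 (one_le_inv₀ hpos |>.2 hz)
  rw [show ‖z‖⁻¹ • z - z = (‖z‖⁻¹ - 1) • z by rw [sub_smul, one_smul], norm_smul,
    Real.norm_eq_abs, abs_of_nonneg hcoef]
  field_simp

theorem exists_norm_le_one_smul_eq {a : ℝ} {w : E} (hw : ‖w‖ ≤ a) :
    ∃ u : E, ‖u‖ ≤ 1 ∧ a • u = w := by
  rcases (norm_nonneg w |>.trans hw).eq_or_lt with rfl | ha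
  · exact ⟨0, by simp, by simp [norm_le_zero_iff.1 hw]⟩
  refine ⟨a⁻¹ • w, ?_, by simp [smul_smul, ha.ne']⟩
  rw [norm_smul, Real.norm_eq_abs, abs_of_pos (inv_pos.2 ha)]
  exact inv_mul_le_one_of_le₀ hw ha.le

theorem norm_smul_le_of_norm_le_one {a : ℝ} (ha : 0 ≤ a) {u : E} (hu : ‖u‖ ≤ 1) :
    ‖a • u‖ ≤ a := by
  rw [norm_smul_of_nonneg ha]
  exact mul_le_of_le_one_right ha hu

theorem norm_sub_le_norm_smul_sub {u : E} (hu : ‖u‖ ≤ 1) {a : ℝ} (ha1 : a ≤ 1)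
    (x z : E) : ‖u - x‖ ≤ (1 - a) + ‖a • u - z‖ + ‖z - x‖ := by
  have hu' : ‖u - a • u‖ ≤ 1 - a := by
    rw [show u - a • u = (1 - a) • u by rw [sub_smul, one_smul]]
    exact norm_smul_le_of_norm_le_one (sub_nonneg.2 ha1) hu
  calc ‖u - x‖ = ‖(u - a • u) + (a • u - z) + (z - x)‖ := by abel_nf
    _ ≤ ‖u - a • u‖ + ‖a • u - z‖ + ‖z - x‖ := norm_add₃_le
    _ ≤ (1 - a) + ‖a • u - z‖ + ‖z - x‖ := by gcongr

end Vectors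

section Thickness

variable {E F G : Type*} [NormedAddCommGroup E] [NormedSpace ℝ E]
  [NormedAddCommGroup F] [NormedSpace ℝ F] [NormedAddCommGroup G] [NormedSpace ℝ G]

theorem IsWeaklyOpen.preimage_affine {U : Set G} (hU : IsWeaklyOpen G U) (L : E →L[ℝ] G)
    (c : G) : IsWeaklyOpen E ((fun u => L u + c) ⁻¹' U) := by
  have hcont : Continuous fun w : WeakSpace ℝ E => WeakSpace.map L w + toWeakSpace ℝ G c :=
    (WeakSpace.map L).continuous.add continuous_const
  have himage : toWeakSpace ℝ E '' ((fun u => L u + c) ⁻¹' U) =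
      (fun w : WeakSpace ℝ E => WeakSpace.map L w + toWeakSpace ℝ G c) ⁻¹'
        (toWeakSpace ℝ G '' U) := by
    rw [(toWeakSpace ℝ E).image_eq_preimage_symm, (toWeakSpace ℝ G).image_eq_preimage_symm]
    rfl
  rw [IsWeaklyOpen, himage]
  exact hcont.isOpen_preimage _ hU

theorem IsWeaklyOpen.preimage_prodMk_left {U : Set (E × F)} (hU : IsWeaklyOpen (E × F) U)
    (y : F) : IsWeaklyOpen E ((fun x => (x, y)) ⁻¹' U) := by
  simpa using hU.preimage_affine (ContinuousLinearMap.inl ℝ E F) (0, y)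

theorem IsWeaklyOpen.preimage_prodMk_right {U : Set (E × F)} (hU : IsWeaklyOpen (E × F) U)
    (x : E) : IsWeaklyOpen F ((fun y => (x, y)) ⁻¹' U) := by
  simpa using hU.preimage_affine (ContinuousLinearMap.inr ℝ E F) (x, 0)

theorem Tw_nonneg : 0 ≤ Tw E :=
  Real.sInf_nonneg fun _ hr => hr.1.le

theorem nontrivial_of_Tw_pos (h : 0 < Tw E) : Nontrivial E := by
  unfold Tw at h
  rcases eq_empty_or_nonempty {r : ℝ | 0 < r ∧ ∃ x : E, ‖x‖ = 1 ∧ ∃ W : Set E,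
      IsRelWeakOpen E W ∧ W ⊆ closedBall x r} with he | ⟨r, -, x, hx, -⟩
  · rw [he, Real.sInf_empty] at h
    exact absurd h (lt_irrefl 0)
  · exact nontrivial_of_ne x 0 (by rintro rfl; simp at hx)

theorem Tw_le {r : ℝ} (hr : 0 < r) {x : E} (hx : ‖x‖ = 1) {W : Set E} (hW : IsRelWeakOpen E W)
    (hWr : W ⊆ closedBall x r) : Tw E ≤ r :=
  csInf_le ⟨0, fun _ hr => hr.1.le⟩ ⟨hr, x, hx, W, hW, hWr⟩

theorem le_Tw [Nontrivial E] {c : ℝ}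
    (h : ∀ r > 0, ∀ x : E, ‖x‖ = 1 → ∀ W, IsRelWeakOpen E W → W ⊆ closedBall x r → c ≤ r) :
    c ≤ Tw E := by
  obtain ⟨x, hx⟩ := exists_norm_eq E zero_le_one
  refine le_csInf ⟨2, two_pos, x, hx, closedBall 0 1,
    ⟨⟨0, mem_closedBall_self zero_le_one⟩, univ, ?_, (inter_univ _).symm⟩, fun w hw => ?_⟩
    fun r ⟨hr, x, hx, W, hW, hWr⟩ => h r hr x hx W hW hWr
  · rw [IsWeaklyOpen, image_univ, (toWeakSpace ℝ E).surjective.range_eq]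
    exact isOpen_univ
  · rw [mem_closedBall_zero_iff] at hw
    rw [mem_closedBall, dist_eq_norm]
    linarith [norm_sub_le w x]

theorem exists_lt_norm_sub_of_lt_Tw {s : ℝ} (hs : 0 < s) (hsE : s < Tw E) {x : E} (hx : ‖x‖ = 1)
    {V : Set E} (hV : IsRelWeakOpen E V) : ∃ u ∈ V, s < ‖u - x‖ := by
  by_contra! h
  refine (Tw_le hs hx hV fun u hu => ?_).not_gt hsE
  rw [mem_closedBall, dist_eq_norm]
  exact h u hu

theorem exists_smul_mem_lt_norm_smul_sub {s : ℝ} (hs : 0 < s) (hsE : s < Tw E) {U : Set E}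
    (hU : IsWeaklyOpen E U) {a : ℝ} (ha : a ≤ 1) {w : E} (hwU : w ∈ U) (hwa : ‖w‖ ≤ a)
    {z : E} (hz : ‖z‖ ≤ 1) :
    ∃ u : E, ‖u‖ ≤ 1 ∧ a • u ∈ U ∧ s - (1 - ‖z‖) - (1 - a) < ‖a • u - z‖ := by
  have : Nontrivial E := nontrivial_of_Tw_pos (hs.trans hsE)
  obtain ⟨u₀, hu₀, rfl⟩ := exists_norm_le_one_smul_eq hwa
  obtain ⟨x, hx, hxz⟩ := exists_norm_eq_one_norm_sub_eq hz
  have hV : IsRelWeakOpen E (closedBall 0 1 ∩ (fun u => a • u) ⁻¹' U) :=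
    ⟨⟨u₀, mem_closedBall_zero_iff.2 hu₀, hwU⟩, _,
      by simpa using hU.preimage_affine (a • ContinuousLinearMap.id ℝ E) 0, rfl⟩
  obtain ⟨u, ⟨hu, huU⟩, hfar⟩ := exists_lt_norm_sub_of_lt_Tw hs hsE hx hV
  rw [mem_closedBall_zero_iff] at hu
  refine ⟨u, hu, huU, ?_⟩
  have := norm_sub_le_norm_smul_sub hu ha x z
  rw [norm_sub_rev z x, hxz] at this
  linarith

end Thickness

section AbsoluteSum

variable {E F G : Type*} [NormedAddCommGroup E] [NormedSpace ℝ E]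
  [NormedAddCommGroup F] [NormedSpace ℝ F] [NormedAddCommGroup G] [NormedSpace ℝ G]
  {N : ℝ → ℝ → ℝ} {e : G ≃ₗ[ℝ] E × F}

theorem norm_symm_apply_eq (he : ∀ z : G, ‖z‖ = N ‖(e z).1‖ ‖(e z).2‖) (p : E × F) :
    ‖e.symm p‖ = N ‖p.1‖ ‖p.2‖ := by
  simpa using he (e.symm p)

theorem isWeaklyOpen_preimage_symm (hN : IsAbsoluteNormalized N)
    (he : ∀ z : G, ‖z‖ = N ‖(e z).1‖ ‖(e z).2‖) {U : Set G} (hU : IsWeaklyOpen G U) :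
    IsWeaklyOpen (E × F) (e.symm ⁻¹' U) := by
  let T : E × F →L[ℝ] G := (e.symm : E × F →ₗ[ℝ] G).mkContinuous 2 fun p => by
    have := hN.le_abs_add_abs ‖p.1‖ ‖p.2‖
    rw [abs_norm, abs_norm] at this
    rw [LinearEquiv.coe_coe, norm_symm_apply_eq he]
    linarith [norm_fst_le p, norm_snd_le p]
  simpa [T] using hU.preimage_affine T 0

theorem exists_mem_lt_norm_sub_fst_add_norm_sub_snd (hN : IsAbsoluteNormalized N)
    (he : ∀ z : G, ‖z‖ = N ‖(e z).1‖ ‖(e z).2‖) {s : ℝ} (hs : 0 < s) (hsE : s < Tw E)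
    (hsF : s < Tw F) {z : G} (hz : ‖z‖ = 1) {W : Set G} (hW : IsRelWeakOpen G W) :
    ∃ w ∈ W, 2 * s - 2 < ‖(e w).1 - (e z).1‖ + ‖(e w).2 - (e z).2‖ := by
  obtain ⟨⟨w, hw⟩, U, hU, rfl⟩ := hW
  obtain ⟨hwB, hwU⟩ := hw
  obtain ⟨⟨z₁, z₂⟩, rfl⟩ := e.symm.surjective z
  obtain ⟨⟨w₁, w₂⟩, rfl⟩ := e.symm.surjective w
  rw [norm_symm_apply_eq he] at hz
  rw [mem_closedBall_zero_iff, norm_symm_apply_eq he] at hwB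
  have hU' : IsWeaklyOpen (E × F) (e.symm ⁻¹' U) := isWeaklyOpen_preimage_symm hN he hU
  have hz₁ : ‖z₁‖ ≤ 1 := by simpa [hz] using hN.abs_le_left ‖z₁‖ ‖z₂‖
  have hz₂ : ‖z₂‖ ≤ 1 := by simpa [hz] using hN.abs_le_right ‖z₁‖ ‖z₂‖
  have hz₁₂ : 1 ≤ ‖z₁‖ + ‖z₂‖ := by simpa [hz] using hN.le_abs_add_abs ‖z₁‖ ‖z₂‖
  set a := ‖w₁‖
  have ha : a ≤ 1 := by simpa [a] using (hN.abs_le_left a ‖w₂‖).trans hwB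
  obtain ⟨b, hw₂b, hab, hNab⟩ := hN.exists_le_one_le_add (norm_nonneg w₁) hwB
  have hb : b ≤ 1 := (le_abs_self b).trans ((hN.abs_le_right a b).trans hNab)
  obtain ⟨u, hu, huU, hufar⟩ := exists_smul_mem_lt_norm_smul_sub hs hsE
    (hU'.preimage_prodMk_left w₂) ha hwU le_rfl hz₁
  obtain ⟨v, hv, hvU, hvfar⟩ := exists_smul_mem_lt_norm_smul_sub hs hsF
    (hU'.preimage_prodMk_right (a • u)) hb huU hw₂b hz₂
  refine ⟨e.symm (a • u, b • v), ⟨?_, hvU⟩, ?_⟩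
  · rw [mem_closedBall_zero_iff, norm_symm_apply_eq he]
    refine (hN.mono (norm_nonneg _) ?_ (norm_nonneg _) ?_).trans hNab
    · exact norm_smul_le_of_norm_le_one (norm_nonneg w₁) hu
    · exact norm_smul_le_of_norm_le_one ((norm_nonneg w₂).trans hw₂b) hv
  · simp only [LinearEquiv.apply_symm_apply]
    linarith

theorem two_mul_mul_min_Tw_sub_one_le_Tw (hN : IsAbsoluteNormalized N)
    (he : ∀ z : G, ‖z‖ = N ‖(e z).1‖ ‖(e z).2‖) {γ : ℝ} (hγ : 0 < γ)
    (hγN : ∀ a b : ℝ, γ * (|a| + |b|) ≤ N a b) :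
    2 * γ * (min (Tw E) (Tw F) - 1) ≤ Tw G := by
  rcases le_or_gt (min (Tw E) (Tw F)) 1 with hm | hm
  · exact (mul_nonpos_of_nonneg_of_nonpos (by positivity) (by linarith)).trans Tw_nonneg
  have : Nontrivial E := nontrivial_of_Tw_pos (one_pos.trans (lt_min_iff.1 hm).1)
  have : Nontrivial G := e.toEquiv.nontrivial
  refine le_Tw fun r hr z hz W hW hWr => ?_
  suffices hs : min (Tw E) (Tw F) ≤ 1 + r / (2 * γ) by
    calc 2 * γ * (min (Tw E) (Tw F) - 1) ≤ 2 * γ * (r / (2 * γ)) := by gcongr; linarith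
      _ = r := by field_simp
  by_contra! hs
  obtain ⟨w, hwW, hfar⟩ := exists_mem_lt_norm_sub_fst_add_norm_sub_snd hN he (by positivity)
    (hs.trans_le (min_le_left _ _)) (hs.trans_le (min_le_right _ _)) hz hW
  have hwz : ‖w - z‖ ≤ r := by simpa [dist_eq_norm] using hWr hwW
  rw [he, map_sub, Prod.fst_sub, Prod.snd_sub] at hwz
  have hγsum := hγN ‖(e w).1 - (e z).1‖ ‖(e w).2 - (e z).2‖
  rw [abs_norm, abs_norm] at hγsum
  have hr' : γ * (2 * (1 + r / (2 * γ)) - 2) = r := by field_simp; ring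
  linarith [mul_lt_mul_of_pos_left hfar hγ]

end AbsoluteSum

open scoped ENNReal

theorem WithLp.prod_norm_eq_norm_toLp_norm (p : ℝ≥0∞) {α β : Type*} [SeminormedAddCommGroup α]
    [SeminormedAddCommGroup β] (x : WithLp p (α × β)) :
    ‖x‖ = ‖WithLp.toLp p (‖x.fst‖, ‖x.snd‖)‖ := by
  rcases p.trichotomy with rfl | rfl | hp
  · simp
  · simp [WithLp.prod_norm_eq_sup]
  · simp [WithLp.prod_norm_eq_add hp]

section Lp

variable (p : ℝ≥0∞) [Fact (1 ≤ p)]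

theorem isAbsoluteNormalized_withLp :
    IsAbsoluteNormalized fun a b : ℝ => ‖WithLp.toLp p (a, b)‖ where
  triangle a b c d := by
    rw [← Prod.mk_add_mk, WithLp.toLp_add]
    exact norm_add_le _ _
  homog t a b := by
    rw [← smul_eq_mul, ← smul_eq_mul, ← Prod.smul_mk, WithLp.toLp_smul, norm_smul,
      Real.norm_eq_abs]
  eq_abs a b := by simp [WithLp.prod_norm_eq_norm_toLp_norm p (WithLp.toLp p (a, b))]
  one_zero := by simp
  zero_one := by simp

theorem two_rpow_inv_div_two_mul_le_norm_toLp (hp : p ≠ ⊤) (a b : ℝ) :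
    2 ^ (1 / p.toReal) / 2 * (|a| + |b|) ≤ ‖WithLp.toLp p (a, b)‖ := by
  have hq : 1 ≤ p.toReal := by simpa using ENNReal.toReal_mono hp (Fact.out : 1 ≤ p)
  set q := p.toReal
  have hmean : ((1 / 2 : ℝ) * |a| + 1 / 2 * |b|) ^ q ≤ 1 / 2 * |a| ^ q + 1 / 2 * |b| ^ q :=
    (convexOn_rpow hq).2 (abs_nonneg a) (abs_nonneg b) (by norm_num) (by norm_num) (by norm_num)
  rw [WithLp.prod_norm_eq_add (by positivity), one_div q,
    Real.le_rpow_inv_iff_of_pos (by positivity) (by positivity) (by positivity), ← one_div]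
  calc (2 ^ (1 / q) / 2 * (|a| + |b|)) ^ q
      = (2 ^ (1 / q)) ^ q * ((1 / 2 : ℝ) * |a| + 1 / 2 * |b|) ^ q := by
        rw [← Real.mul_rpow (by positivity) (by positivity)]
        ring_nf
    _ ≤ 2 * (1 / 2 * |a| ^ q + 1 / 2 * |b| ^ q) := by
        rw [← Real.rpow_mul zero_le_two, one_div_mul_cancel (by positivity), Real.rpow_one]
        gcongr
    _ = ‖a‖ ^ q + ‖b‖ ^ q := by simp only [Real.norm_eq_abs]; ring

end Lp

theorem stmt_4_general (X Y : Type*) [NormedAddCommGroup X] [NormedSpace ℝ X]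
    [NormedAddCommGroup Y] [NormedSpace ℝ Y]
    (N : ℝ → ℝ → ℝ)
    (N_triangle : ∀ a b c d : ℝ, N (a + c) (b + d) ≤ N a b + N c d)
    (N_homog : ∀ t a b : ℝ, N (t * a) (t * b) = |t| * N a b)
    (N_abs : ∀ a b : ℝ, N a b = N |a| |b|)
    (N_norm₁ : N 1 0 = 1) (N_norm₂ : N 0 1 = 1)
    (Z : Type*) [NormedAddCommGroup Z] [NormedSpace ℝ Z]
    (e : Z ≃ₗ[ℝ] X × Y) (hZ : ∀ z : Z, ‖z‖ = N ‖(e z).1‖ ‖(e z).2‖)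
    (γ : ℝ) (hγ : 0 < γ) (hγN : ∀ a b : ℝ, γ * (|a| + |b|) ≤ N a b) :
    2 * γ * (min (Tw X) (Tw Y) - 1) ≤ Tw Z ∧
      ∀ (p : ENNReal) [Fact (1 ≤ p)], 1 < p → p ≠ ⊤ →
        (2 : ℝ) ^ (1 / p.toReal) * (min (Tw X) (Tw Y) - 1) ≤ Tw (WithLp p (X × Y)) := by
  refine ⟨two_mul_mul_min_Tw_sub_one_le_Tw ⟨N_triangle, N_homog, N_abs, N_norm₁, N_norm₂⟩ hZ hγ
    hγN, fun p _ _ hp => ?_⟩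
  have hlp := two_mul_mul_min_Tw_sub_one_le_Tw (isAbsoluteNormalized_withLp p)
    (e := WithLp.linearEquiv p ℝ (X × Y)) (WithLp.prod_norm_eq_norm_toLp_norm p)
    (by positivity) (two_rpow_inv_div_two_mul_le_norm_toLp p hp)
  convert hlp using 1
  ring

theorem stmt_4 (X Y : Type*) [NormedAddCommGroup X] [NormedSpace ℝ X]
    [CompleteSpace X] [Nontrivial X] [NormedAddCommGroup Y] [NormedSpace ℝ Y]
    [CompleteSpace Y] [Nontrivial Y]
    (N : ℝ → ℝ → ℝ)
    (N_triangle : ∀ a b c d : ℝ, N (a + c) (b + d) ≤ N a b + N c d)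
    (N_homog : ∀ t a b : ℝ, N (t * a) (t * b) = |t| * N a b)
    (N_pos : ∀ a b : ℝ, N a b = 0 → a = 0 ∧ b = 0)
    (N_abs : ∀ a b : ℝ, N a b = N |a| |b|)
    (N_norm₁ : N 1 0 = 1) (N_norm₂ : N 0 1 = 1)
    (Z : Type*) [NormedAddCommGroup Z] [NormedSpace ℝ Z] [CompleteSpace Z]
    (e : Z ≃ₗ[ℝ] X × Y) (hZ : ∀ z : Z, ‖z‖ = N ‖(e z).1‖ ‖(e z).2‖)
    (γ : ℝ) (hγ : 0 < γ) (hγN : ∀ a b : ℝ, γ * (|a| + |b|) ≤ N a b) :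
    2 * γ * (min (Tw X) (Tw Y) - 1) ≤ Tw Z ∧
      ∀ (p : ENNReal) [Fact (1 ≤ p)], 1 < p → p ≠ ⊤ →
        (2 : ℝ) ^ (1 / p.toReal) * (min (Tw X) (Tw Y) - 1) ≤ Tw (WithLp p (X × Y)) :=
  stmt_4_general X Y N N_triangle N_homog N_abs N_norm₁ N_norm₂ Z e hZ γ hγ hγN
end
end

section
/- Let X and Y be real Banach spaces, let N be an absolute normalized norm on ℝ², and let Γ > 0 be such that N(a,b) ≤ Γ·max(|a|,|b|) for all (a,b) ∈ ℝ². If (1,0) or (0,1) is an extreme point of the closed unit ball of (ℝ², N), then 𝒯^s(X ⊕_N Y) ≤ Γ. In particular, for 1 < p < ∞, 𝒯^s(X ⊕_p Y) ≤ 2^{1/p}, where X ⊕_p Y is the ℓ_p-sum. -/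
open Metric Set

noncomputable section

variable (X : Type*) [NormedAddCommGroup X] [NormedSpace ℝ X]

/-!
If `(1, 0)` is an extreme point of the unit ball of `N`, then `N (1, δ) > 1` for every `δ > 0`, and
since absolute norms are monotone in each coordinate, a point `(a, b)` of the unit ball with `a`
close to `1` must have `|b|` small. Hence, for `x ∈ S_X` normed by `g ∈ S_{X*}` and `y ∈ S_Y`, every
point `z` of a thin enough slice of `B_Z` defined by `z ↦ g (z.1)` has `‖z.1‖ ≤ 1` and
`‖z.2‖ ≤ δ`, so `‖z - (0, y)‖ = N (‖z.1‖, ‖z.2 - y‖) ≤ Γ (1 + δ)`. For `ℓ_p`-sums, `N` is the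
`ℓ_p`-norm of `ℝ²`, which is bounded by `2 ^ (1 / p)` times the max-norm.
-/

structure IsAbsoluteNormalizedNorm (N : ℝ → ℝ → ℝ) : Prop where
  triangle : ∀ a b c d : ℝ, N (a + c) (b + d) ≤ N a b + N c d
  homog : ∀ t a b : ℝ, N (t * a) (t * b) = |t| * N a b
  abs : ∀ a b : ℝ, N a b = N |a| |b|
  one_zero : N 1 0 = 1
  zero_one : N 0 1 = 1

namespace IsAbsoluteNormalizedNorm

variable {N : ℝ → ℝ → ℝ}

theorem swap (hN : IsAbsoluteNormalizedNorm N) : IsAbsoluteNormalizedNorm fun a b => N b a where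
  triangle a b c d := hN.triangle b a d c
  homog t a b := hN.homog t b a
  abs a b := hN.abs b a
  one_zero := hN.zero_one
  zero_one := hN.one_zero

theorem apply_zero (hN : IsAbsoluteNormalizedNorm N) (a : ℝ) : N a 0 = |a| := by
  simpa [hN.one_zero] using hN.homog a 1 0

theorem apply_neg_snd (hN : IsAbsoluteNormalizedNorm N) (a b : ℝ) : N a (-b) = N a b := by
  rw [hN.abs, abs_neg, ← hN.abs]

/-- Writing `b = t * d + (1 - t) * (-d)` shows `N a b ≤ t N a d + (1 - t) N a (-d) = N a d`. -/
theorem mono_snd (hN : IsAbsoluteNormalizedNorm N) (a : ℝ) {b d : ℝ} (hbd : |b| ≤ |d|) :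
    N a b ≤ N a d := by
  rw [hN.abs a b, hN.abs a d]
  generalize |a| = a
  obtain ⟨hu, hv⟩ : 0 ≤ |b| ∧ 0 ≤ |d| := ⟨abs_nonneg b, abs_nonneg d⟩
  generalize |b| = u, |d| = v at hbd hu hv
  rcases hv.eq_or_lt with rfl | hv
  · rw [le_antisymm hbd hu]
  set t := (v + u) / (2 * v)
  have ht : 0 ≤ t := by positivity
  have ht' : 0 ≤ 1 - t := by
    rw [sub_nonneg, div_le_one (by positivity)]
    linarith
  calc N a u = N (t * a + (1 - t) * a) (t * v + (1 - t) * -v) := by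
        congr 1
        · ring
        · simp only [t]
          field_simp
          ring
    _ ≤ N (t * a) (t * v) + N ((1 - t) * a) ((1 - t) * -v) := hN.triangle ..
    _ = N a v := by
        rw [hN.homog, hN.homog, hN.apply_neg_snd, abs_of_nonneg ht, abs_of_nonneg ht']
        ring

theorem abs_fst_le (hN : IsAbsoluteNormalizedNorm N) (a b : ℝ) : |a| ≤ N a b := by
  simpa [hN.apply_zero] using hN.mono_snd a (b := 0) (d := b) (by simp)

theorem one_zero_mem_extremePoints_iff (hN : IsAbsoluteNormalizedNorm N) :
    ((1 : ℝ), (0 : ℝ)) ∈ extremePoints ℝ {q : ℝ × ℝ | N q.1 q.2 ≤ 1} ↔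
      ∀ b ≠ 0, 1 < N 1 b := by
  constructor
  · intro hext b hb
    by_contra! hb1
    have hmid : ((1 : ℝ), (0 : ℝ)) ∈ openSegment ℝ (1, b) (1, -b) :=
      ⟨1 / 2, 1 / 2, by norm_num, by norm_num, by norm_num, by ext <;> norm_num⟩
    have := hext.2 (x₁ := (1, b)) hb1 (x₂ := (1, -b)) (by simpa [hN.apply_neg_snd]) hmid
    exact hb (Prod.ext_iff.1 this).2
  · intro h
    refine ⟨by simp [hN.one_zero], ?_⟩
    rintro ⟨a, b⟩ (hab : N a b ≤ 1) ⟨c, d⟩ (hcd : N c d ≤ 1) ⟨s, t, hs, ht, hst, heq⟩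
    simp only [Prod.smul_mk, Prod.mk_add_mk, Prod.mk.injEq, smul_eq_mul] at heq
    have ha : a ≤ 1 := (abs_le.1 ((hN.abs_fst_le a b).trans hab)).2
    have hc : c ≤ 1 := (abs_le.1 ((hN.abs_fst_le c d).trans hcd)).2
    obtain rfl : a = 1 := by nlinarith
    obtain rfl : b = 0 := by_contra fun hb => (h b hb).not_ge hab
    rfl

theorem exists_abs_snd_lt (hN : IsAbsoluteNormalizedNorm N)
    (hext : ((1 : ℝ), (0 : ℝ)) ∈ extremePoints ℝ {q : ℝ × ℝ | N q.1 q.2 ≤ 1})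
    {δ : ℝ} (hδ : 0 < δ) : ∃ α > 0, ∀ a b : ℝ, N a b ≤ 1 → 1 - α < a → |b| < δ := by
  refine ⟨N 1 δ - 1, sub_pos.2 (hN.one_zero_mem_extremePoints_iff.1 hext δ hδ.ne'), ?_⟩
  intro a b hab ha
  by_contra! hδb
  have ha1 : a ≤ 1 := (abs_le.1 ((hN.abs_fst_le a b).trans hab)).2
  have : N 1 δ ≤ N a b + (1 - a) := calc
    N 1 δ ≤ N 1 b := hN.mono_snd 1 (by rwa [abs_of_pos hδ])
    _ = N (a + (1 - a)) (b + 0) := by ring_nf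
    _ ≤ N a b + N (1 - a) 0 := hN.triangle ..
    _ = N a b + (1 - a) := by rw [hN.apply_zero, abs_of_nonneg (sub_nonneg.2 ha1)]
  linarith

theorem one_le_of_le_mul_max (hN : IsAbsoluteNormalizedNorm N) {Γ : ℝ}
    (hΓN : ∀ a b : ℝ, N a b ≤ Γ * max |a| |b|) : 1 ≤ Γ := by
  simpa [hN.one_zero] using hΓN 1 0

end IsAbsoluteNormalizedNorm

theorem mem_extremePoints_swap {N : ℝ → ℝ → ℝ}
    (h : ((0 : ℝ), (1 : ℝ)) ∈ extremePoints ℝ {q : ℝ × ℝ | N q.1 q.2 ≤ 1}) :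
    ((1 : ℝ), (0 : ℝ)) ∈ extremePoints ℝ {q : ℝ × ℝ | N q.2 q.1 ≤ 1} := by
  have hswap : LinearEquiv.prodComm ℝ ℝ ℝ '' {q : ℝ × ℝ | N q.1 q.2 ≤ 1} =
      {q : ℝ × ℝ | N q.2 q.1 ≤ 1} := by
    ext ⟨a, b⟩
    simp
  have := mem_image_of_mem (LinearEquiv.prodComm ℝ ℝ ℝ) h
  rwa [image_extremePoints, hswap] at this

theorem Ts_le_of_subset_closedBall {Z : Type*} [NormedAddCommGroup Z] [NormedSpace ℝ Z] {x : Z}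
    (hx : ‖x‖ = 1) {S : Set Z} (hS : IsSlice Z S) {r : ℝ} (hr : 0 < r)
    (hSr : S ⊆ closedBall x r) : Ts Z ≤ r :=
  csInf_le ⟨0, fun _ h => h.1.le⟩ ⟨hr, x, hx, S, hS, hSr⟩

theorem exists_norm_one_dual (X : Type*) [NormedAddCommGroup X] [NormedSpace ℝ X] [Nontrivial X] :
    ∃ x : X, ‖x‖ = 1 ∧ ∃ g : X →L[ℝ] ℝ, ‖g‖ = 1 ∧ g x = 1 := by
  obtain ⟨x, hx⟩ := exists_norm_eq X zero_le_one
  obtain ⟨g, hg, hgx⟩ := exists_dual_vector ℝ x (by simp [hx])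
  exact ⟨x, hx, g, hg, by simpa [hx] using hgx⟩

section AbsoluteSum

variable {X} {Y Z : Type*} [NormedAddCommGroup Y] [NormedSpace ℝ Y]
  [NormedAddCommGroup Z] [NormedSpace ℝ Z] {N : ℝ → ℝ → ℝ}

theorem IsAbsoluteNormalizedNorm.norm_fst_le_norm (hN : IsAbsoluteNormalizedNorm N)
    {e : Z ≃ₗ[ℝ] X × Y} (hZ : ∀ z : Z, ‖z‖ = N ‖(e z).1‖ ‖(e z).2‖) (z : Z) : ‖(e z).1‖ ≤ ‖z‖ := by
  simpa [hZ z] using hN.abs_fst_le ‖(e z).1‖ ‖(e z).2‖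

theorem exists_norm_one_comp_fst (hN : IsAbsoluteNormalizedNorm N) {e : Z ≃ₗ[ℝ] X × Y}
    (hZ : ∀ z : Z, ‖z‖ = N ‖(e z).1‖ ‖(e z).2‖) {x : X} (hx : ‖x‖ = 1) {g : X →L[ℝ] ℝ}
    (hg : ‖g‖ = 1) (hgx : g x = 1) :
    ∃ f : Z →L[ℝ] ℝ, ‖f‖ = 1 ∧ ∀ z, f z = g (e z).1 := by
  have hbound (z : Z) : ‖g (e z).1‖ ≤ 1 * ‖z‖ := calc
    ‖g (e z).1‖ ≤ ‖g‖ * ‖(e z).1‖ := g.le_opNorm _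
    _ ≤ 1 * ‖z‖ := by rw [hg]; gcongr; exact hN.norm_fst_le_norm hZ z
  let f := (g.toLinearMap ∘ₗ LinearMap.fst ℝ X Y ∘ₗ e.toLinearMap).mkContinuous 1 hbound
  refine ⟨f, le_antisymm (LinearMap.mkContinuous_norm_le _ zero_le_one _) ?_, fun z => rfl⟩
  have hx' : ‖e.symm (x, 0)‖ = 1 := by simp [hZ, hx, hN.one_zero]
  have hfx : f (e.symm (x, 0)) = 1 := by
    change g (e (e.symm (x, 0))).1 = 1
    simp [hgx]
  simpa [hfx, hx'] using f.le_opNorm (e.symm (x, 0))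

theorem sliceSet_subset_closedBall (hN : IsAbsoluteNormalizedNorm N) {e : Z ≃ₗ[ℝ] X × Y}
    (hZ : ∀ z : Z, ‖z‖ = N ‖(e z).1‖ ‖(e z).2‖) {Γ : ℝ} (hΓN : ∀ a b : ℝ, N a b ≤ Γ * max |a| |b|)
    {g : X →L[ℝ] ℝ} (hg : ‖g‖ = 1) {f : Z →L[ℝ] ℝ} (hf : ∀ z, f z = g (e z).1) {y : Y}
    (hy : ‖y‖ = 1) {α δ : ℝ} (hαδ : ∀ a b : ℝ, N a b ≤ 1 → 1 - α < a → |b| < δ) :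
    sliceSet Z f α ⊆ closedBall (e.symm (0, y)) (Γ * (1 + δ)) := by
  rintro z ⟨hz, hfz⟩
  rw [mem_closedBall_zero_iff, hZ] at hz
  have hz₁ : ‖(e z).1‖ ≤ 1 := (hN.norm_fst_le_norm hZ z).trans (by rwa [hZ])
  have hfz₁ : f z ≤ ‖(e z).1‖ := calc
    f z ≤ ‖g (e z).1‖ := (hf z).le.trans (le_abs_self _)
    _ ≤ ‖g‖ * ‖(e z).1‖ := g.le_opNorm _
    _ = ‖(e z).1‖ := by rw [hg, one_mul]
  have hz₂ : ‖(e z).2‖ < δ := by simpa using hαδ _ _ hz (hfz.trans_le hfz₁)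
  have hΓ := hN.one_le_of_le_mul_max hΓN
  rw [mem_closedBall, dist_eq_norm, hZ]
  calc N ‖(e (z - e.symm (0, y))).1‖ ‖(e (z - e.symm (0, y))).2‖
      = N ‖(e z).1‖ ‖(e z).2 - y‖ := by simp
    _ ≤ Γ * max |‖(e z).1‖| |‖(e z).2 - y‖| := hΓN _ _
    _ ≤ Γ * (1 + δ) := by
      gcongr
      rw [abs_norm, abs_norm]
      refine max_le (by linarith [hz₁, (norm_nonneg (e z).2).trans hz₂.le]) ?_
      linarith [norm_sub_le (e z).2 y]

theorem Ts_le_of_mem_extremePoints [Nontrivial X] [Nontrivial Y] (hN : IsAbsoluteNormalizedNorm N)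
    {e : Z ≃ₗ[ℝ] X × Y} (hZ : ∀ z : Z, ‖z‖ = N ‖(e z).1‖ ‖(e z).2‖)
    (hext : ((1 : ℝ), (0 : ℝ)) ∈ extremePoints ℝ {q : ℝ × ℝ | N q.1 q.2 ≤ 1}) {Γ : ℝ}
    (hΓN : ∀ a b : ℝ, N a b ≤ Γ * max |a| |b|) : Ts Z ≤ Γ := by
  obtain ⟨x, hx, g, hg, hgx⟩ := exists_norm_one_dual X
  obtain ⟨y, hy⟩ := exists_norm_eq Y zero_le_one
  obtain ⟨f, hf, hfg⟩ := exists_norm_one_comp_fst hN hZ hx hg hgx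
  have hy' : ‖e.symm (0, y)‖ = 1 := by simp [hZ, hy, hN.zero_one]
  have hΓ := hN.one_le_of_le_mul_max hΓN
  refine le_of_forall_pos_le_add fun ε hε => ?_
  obtain ⟨α, hα, hαδ⟩ := hN.exists_abs_snd_lt hext (δ := ε / Γ) (by positivity)
  calc Ts Z ≤ Γ * (1 + ε / Γ) :=
        Ts_le_of_subset_closedBall hy' ⟨f, hf, α, hα, rfl⟩ (by positivity)
          (sliceSet_subset_closedBall hN hZ hΓN hg hfg hy hαδ)
    _ = Γ + ε := by field_simp

end AbsoluteSum

theorem ENNReal.toReal_pos_of_one_le {p : ENNReal} (h1 : 1 ≤ p) (hp : p ≠ ⊤) : 0 < p.toReal :=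
  ENNReal.toReal_pos (zero_lt_one.trans_le h1).ne' hp

section Lp

variable {X} {Y : Type*} [NormedAddCommGroup Y] [NormedSpace ℝ Y] {p : ENNReal} [Fact (1 ≤ p)]

theorem WithLp.norm_toLp_real_prod (hp : p ≠ ⊤) (a b : ℝ) :
    ‖WithLp.toLp p (a, b)‖ = (|a| ^ p.toReal + |b| ^ p.toReal) ^ (1 / p.toReal) := by
  have hp0 := ENNReal.toReal_pos_of_one_le Fact.out hp
  simp [WithLp.prod_norm_eq_add hp0]

theorem isAbsoluteNormalizedNorm_withLp (hp : p ≠ ⊤) :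
    IsAbsoluteNormalizedNorm fun a b => ‖WithLp.toLp p (a, b)‖ where
  triangle a b c d := norm_add_le (WithLp.toLp p (a, b)) (WithLp.toLp p (c, d))
  homog t a b := norm_smul t (WithLp.toLp p (a, b))
  abs a b := by simp [WithLp.norm_toLp_real_prod hp]
  one_zero := by simp
  zero_one := by simp

theorem one_lt_norm_toLp_one (hp : p ≠ ⊤) {b : ℝ} (hb : b ≠ 0) :
    1 < ‖WithLp.toLp p ((1 : ℝ), b)‖ := by
  have hp0 := ENNReal.toReal_pos_of_one_le Fact.out hp
  rw [WithLp.norm_toLp_real_prod hp, abs_one, Real.one_rpow]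
  exact Real.one_lt_rpow (lt_add_of_pos_right 1 (Real.rpow_pos_of_pos (abs_pos.2 hb) _))
    (by positivity)

theorem norm_toLp_le_mul_max (hp : p ≠ ⊤) (a b : ℝ) :
    ‖WithLp.toLp p (a, b)‖ ≤ 2 ^ (1 / p.toReal) * max |a| |b| := by
  have hp0 := ENNReal.toReal_pos_of_one_le Fact.out hp
  have hm : 0 ≤ max |a| |b| := (abs_nonneg a).trans (le_max_left _ _)
  rw [WithLp.norm_toLp_real_prod hp]
  calc (|a| ^ p.toReal + |b| ^ p.toReal) ^ (1 / p.toReal)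
      ≤ (2 * max |a| |b| ^ p.toReal) ^ (1 / p.toReal) := by
        gcongr
        rw [two_mul]
        gcongr <;> simp
    _ = 2 ^ (1 / p.toReal) * max |a| |b| := by
        rw [Real.mul_rpow zero_le_two (by positivity), one_div, Real.rpow_rpow_inv hm hp0.ne']

theorem WithLp.norm_prod_eq_norm_toLp {α β : Type*} [SeminormedAddCommGroup α]
    [SeminormedAddCommGroup β] (hp : p ≠ ⊤) (z : WithLp p (α × β)) :
    ‖z‖ = ‖WithLp.toLp p (‖z.fst‖, ‖z.snd‖)‖ := by
  simp [WithLp.norm_toLp_real_prod hp,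
    WithLp.prod_norm_eq_add (ENNReal.toReal_pos_of_one_le Fact.out hp)]

theorem Ts_withLp_prod_le [Nontrivial X] [Nontrivial Y] (hp : p ≠ ⊤) :
    Ts (WithLp p (X × Y)) ≤ (2 : ℝ) ^ (1 / p.toReal) :=
  Ts_le_of_mem_extremePoints (isAbsoluteNormalizedNorm_withLp hp)
    (e := WithLp.linearEquiv p ℝ (X × Y)) (WithLp.norm_prod_eq_norm_toLp hp)
    ((isAbsoluteNormalizedNorm_withLp hp).one_zero_mem_extremePoints_iff.2
      fun _ hb => one_lt_norm_toLp_one hp hb)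
    (norm_toLp_le_mul_max hp)

end Lp

theorem stmt_6_general (X Y : Type*) [NormedAddCommGroup X] [NormedSpace ℝ X]
    [Nontrivial X] [NormedAddCommGroup Y] [NormedSpace ℝ Y]
    [Nontrivial Y]
    (N : ℝ → ℝ → ℝ)
    (N_triangle : ∀ a b c d : ℝ, N (a + c) (b + d) ≤ N a b + N c d)
    (N_homog : ∀ t a b : ℝ, N (t * a) (t * b) = |t| * N a b)
    (N_abs : ∀ a b : ℝ, N a b = N |a| |b|)
    (N_norm₁ : N 1 0 = 1) (N_norm₂ : N 0 1 = 1)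
    (Z : Type*) [NormedAddCommGroup Z] [NormedSpace ℝ Z]
    (e : Z ≃ₗ[ℝ] X × Y) (hZ : ∀ z : Z, ‖z‖ = N ‖(e z).1‖ ‖(e z).2‖)
    (hext : ((1 : ℝ), (0 : ℝ)) ∈ Set.extremePoints ℝ {q : ℝ × ℝ | N q.1 q.2 ≤ 1} ∨
      ((0 : ℝ), (1 : ℝ)) ∈ Set.extremePoints ℝ {q : ℝ × ℝ | N q.1 q.2 ≤ 1})
    (Γ : ℝ) (hΓN : ∀ a b : ℝ, N a b ≤ Γ * max |a| |b|) :
    Ts Z ≤ Γ ∧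
      ∀ (p : ENNReal) [Fact (1 ≤ p)], 1 < p → p ≠ ⊤ →
        Ts (WithLp p (X × Y)) ≤ (2 : ℝ) ^ (1 / p.toReal) := by
  have hN : IsAbsoluteNormalizedNorm N := ⟨N_triangle, N_homog, N_abs, N_norm₁, N_norm₂⟩
  refine ⟨?_, fun p _ _ hp => Ts_withLp_prod_le hp⟩
  rcases hext with h | h
  · exact Ts_le_of_mem_extremePoints hN hZ h hΓN
  · refine Ts_le_of_mem_extremePoints hN.swap (e := e.trans (LinearEquiv.prodComm ℝ X Y))
      (fun z => hZ z) (mem_extremePoints_swap h) fun a b => ?_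
    simpa [max_comm] using hΓN b a

theorem stmt_6 (X Y : Type*) [NormedAddCommGroup X] [NormedSpace ℝ X]
    [CompleteSpace X] [Nontrivial X] [NormedAddCommGroup Y] [NormedSpace ℝ Y]
    [CompleteSpace Y] [Nontrivial Y]
    (N : ℝ → ℝ → ℝ)
    (N_triangle : ∀ a b c d : ℝ, N (a + c) (b + d) ≤ N a b + N c d)
    (N_homog : ∀ t a b : ℝ, N (t * a) (t * b) = |t| * N a b)
    (N_pos : ∀ a b : ℝ, N a b = 0 → a = 0 ∧ b = 0)
    (N_abs : ∀ a b : ℝ, N a b = N |a| |b|)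
    (N_norm₁ : N 1 0 = 1) (N_norm₂ : N 0 1 = 1)
    (Z : Type*) [NormedAddCommGroup Z] [NormedSpace ℝ Z] [CompleteSpace Z]
    (e : Z ≃ₗ[ℝ] X × Y) (hZ : ∀ z : Z, ‖z‖ = N ‖(e z).1‖ ‖(e z).2‖)
    (hext : ((1 : ℝ), (0 : ℝ)) ∈ Set.extremePoints ℝ {q : ℝ × ℝ | N q.1 q.2 ≤ 1} ∨
      ((0 : ℝ), (1 : ℝ)) ∈ Set.extremePoints ℝ {q : ℝ × ℝ | N q.1 q.2 ≤ 1})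
    (Γ : ℝ) (hΓ : 0 < Γ) (hΓN : ∀ a b : ℝ, N a b ≤ Γ * max |a| |b|) :
    Ts Z ≤ Γ ∧
      ∀ (p : ENNReal) [Fact (1 ≤ p)], 1 < p → p ≠ ⊤ →
        Ts (WithLp p (X × Y)) ≤ (2 : ℝ) ^ (1 / p.toReal) :=
  stmt_6_general X Y N N_triangle N_homog N_abs N_norm₁ N_norm₂ Z e hZ hext Γ hΓN
end
end

section
/- For every r > 0 there exists a real Banach space X such that 𝒯^cc(X) = 𝒯(X) = 𝒯^s(X) = r/(1+r). -/
open Metric Set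

noncomputable section

variable (X : Type*) [NormedAddCommGroup X] [NormedSpace ℝ X]

/-!
Take `X = ℝ × c₀` with `‖(a, z)‖ = max (max |a| ‖z‖) ((|a| + ‖z‖) / (1 + s))`, where
`s = r / (1 + r) ∈ (0, 1)`. On the slice of `B_X` given by the first coordinate and a small `α`,
`a > 1 - α` and `|a| + ‖z‖ ≤ 1 + s` force `‖z‖ < s + α`, so the slice lies in a ball of radius about
`s` around `(1, 0)`: `𝒯ˢ(X) ≤ s`. Conversely, a relatively weakly open set containing `(a, z)`
also contains `(a, (z₀, …, z_{m-1}, ±s, 0, …))` for all large `m`, since truncations converge in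
norm and the unit vectors of `c₀` are weakly null; these points stay in `B_X` because `s ≤ 1`.
Choosing the sign against the `m`-th coordinate of a given `x`, a suitable point of any convex
combination of such sets has `m`-th coordinate `∓s`, hence lies at distance at least `s` from `x`:
`𝒯ᶜᶜ(X) ≥ s`. As `𝒯ᶜᶜ ≤ 𝒯 ≤ 𝒯ˢ`, all three indices equal `s`.
-/

open Filter Topology
open scoped ZeroAtInfty

section

variable {X}

lemma IsRelWeakOpen.eventually_mem {W : Set X} (hW : IsRelWeakOpen X W) {w : X} (hw : w ∈ W)
    {α : Type*} {l : Filter α} {u : α → X}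
    (hu : ∀ f : X →L[ℝ] ℝ, Tendsto (fun n => f (u n)) l (𝓝 (f w)))
    (hball : ∀ᶠ n in l, ‖u n‖ ≤ 1) : ∀ᶠ n in l, u n ∈ W := by
  obtain ⟨-, U, hU, rfl⟩ := hW
  have hweak : Tendsto (fun n => toWeakSpace ℝ X (u n)) l (𝓝 (toWeakSpace ℝ X w)) :=
    (Topology.IsInducing.induced _).tendsto_nhds_iff.mpr (tendsto_pi_nhds.mpr hu)
  filter_upwards [hweak (hU.mem_nhds ⟨w, hw.2, rfl⟩), hball] with n hnU hn
  exact ⟨mem_closedBall_zero_iff.mpr hn, (toWeakSpace ℝ X).injective.mem_set_image.mp hnU⟩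

lemma IsRelWeakOpen.norm_le_one {W : Set X} (hW : IsRelWeakOpen X W) {w : X} (hw : w ∈ W) :
    ‖w‖ ≤ 1 := by
  obtain ⟨-, U, -, rfl⟩ := hW
  exact mem_closedBall_zero_iff.mp hw.1

lemma isRelWeakOpen_sliceSet {f : X →L[ℝ] ℝ} (hf : ‖f‖ = 1) {α : ℝ} (hα : 0 < α) :
    IsRelWeakOpen X (sliceSet X f α) := by
  refine ⟨?_, {y | 1 - α < f y}, ?_, rfl⟩
  · obtain ⟨y, hy, hfy⟩ := f.exists_lt_apply_of_lt_opNorm (r := 1 - α) (by linarith)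
    rw [Real.norm_eq_abs] at hfy
    rcases le_total 0 (f y) with h | h
    · exact ⟨y, mem_closedBall_zero_iff.mpr hy.le, by rwa [abs_of_nonneg h] at hfy⟩
    · refine ⟨-y, mem_closedBall_zero_iff.mpr (by rw [norm_neg]; exact hy.le), ?_⟩
      rwa [abs_of_nonpos h, ← map_neg] at hfy
  · rw [IsWeaklyOpen, LinearEquiv.image_eq_preimage_symm]
    exact isOpen_lt continuous_const (WeakBilin.eval_continuous _ f)

variable (X)

def sliceRadii : Set ℝ :=
  {r : ℝ | 0 < r ∧ ∃ x : X, ‖x‖ = 1 ∧ ∃ S : Set X, IsSlice X S ∧ S ⊆ closedBall x r}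

def weakRadii : Set ℝ :=
  {r : ℝ | 0 < r ∧ ∃ x : X, ‖x‖ = 1 ∧ ∃ W : Set X, IsRelWeakOpen X W ∧ W ⊆ closedBall x r}

def comboRadii : Set ℝ :=
  {r : ℝ | 0 < r ∧ ∃ x : X, ‖x‖ = 1 ∧ ∃ (n : ℕ) (l : Fin n → ℝ) (W : Fin n → Set X),
    (∀ i, 0 ≤ l i) ∧ (∑ i, l i) = 1 ∧ (∀ i, IsRelWeakOpen X (W i)) ∧
    comboSet X l W ⊆ closedBall x r}

lemma sliceRadii_subset_weakRadii : sliceRadii X ⊆ weakRadii X := by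
  rintro r ⟨hr, x, hx, S, ⟨f, hf, α, hα, rfl⟩, hS⟩
  exact ⟨hr, x, hx, _, isRelWeakOpen_sliceSet hf hα, hS⟩

lemma weakRadii_subset_comboRadii : weakRadii X ⊆ comboRadii X := by
  rintro r ⟨hr, x, hx, W, hW, hWx⟩
  refine ⟨hr, x, hx, 1, fun _ => 1, fun _ => W, fun _ => zero_le_one, by simp, fun _ => hW, ?_⟩
  rintro _ ⟨w, hw, rfl⟩
  simpa using hWx (hw 0)

lemma csInf_eq_of_subset_of_subset {A B C : Set ℝ} {s : ℝ} (hAB : A ⊆ B) (hBC : B ⊆ C)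
    (hC : ∀ r ∈ C, s ≤ r) (hA : ∀ ε > 0, s + ε ∈ A) : sInf B = s :=
  csInf_eq_of_forall_ge_of_forall_gt_exists_lt ⟨s + 1, hAB (hA 1 one_pos)⟩
    (fun r hr => hC r (hBC hr))
    fun r hr => ⟨s + (r - s) / 2, hAB (hA _ (by linarith)), by linarith⟩

lemma thickness_indices_eq {s : ℝ} (hcombo : ∀ r ∈ comboRadii X, s ≤ r)
    (hslice : ∀ ε > 0, s + ε ∈ sliceRadii X) : Tcc X = s ∧ Tw X = s ∧ Ts X = s :=
  have hSW := sliceRadii_subset_weakRadii X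
  have hWC := weakRadii_subset_comboRadii X
  ⟨csInf_eq_of_subset_of_subset (hSW.trans hWC) subset_rfl hcombo hslice,
    csInf_eq_of_subset_of_subset hSW hWC hcombo hslice,
    csInf_eq_of_subset_of_subset subset_rfl (hSW.trans hWC) hcombo hslice⟩

end

namespace ZeroAtInftyContinuousMap

def ofEventuallyZero (f : ℕ → ℝ) (hf : ∀ᶠ n in atTop, f n = 0) : C₀(ℕ, ℝ) where
  toFun := f
  continuous_toFun := continuous_of_discreteTopology
  zero_at_infty' := by
    rw [cocompact_eq_cofinite, Nat.cofinite_eq_atTop]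
    exact tendsto_const_nhds.congr' (hf.mono fun _ h => h.symm)

@[simp] lemma ofEventuallyZero_apply (f : ℕ → ℝ) (hf) (n : ℕ) : ofEventuallyZero f hf n = f n :=
  rfl

lemma sum_apply {ι : Type*} (s : Finset ι) (f : ι → C₀(ℕ, ℝ)) (n : ℕ) :
    (∑ i ∈ s, f i) n = ∑ i ∈ s, f i n :=
  map_sum (⟨⟨fun z => z n, rfl⟩, fun _ _ => rfl⟩ : C₀(ℕ, ℝ) →+ ℝ) f s

lemma abs_apply_le_norm (z : C₀(ℕ, ℝ)) (n : ℕ) : |z n| ≤ ‖z‖ := by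
  rw [← norm_toBCF_eq_norm, ← Real.norm_eq_abs]
  exact z.toBCF.norm_coe_le_norm n

lemma norm_le_of_forall_abs_le {z : C₀(ℕ, ℝ)} {C : ℝ} (hC : 0 ≤ C) (h : ∀ n, |z n| ≤ C) :
    ‖z‖ ≤ C := by
  rw [← norm_toBCF_eq_norm]
  exact (BoundedContinuousFunction.norm_le hC).mpr h

def single (m : ℕ) : C₀(ℕ, ℝ) :=
  ofEventuallyZero (fun n => if n = m then 1 else 0)
    ((eventually_gt_atTop m).mono fun _ h => if_neg h.ne')

@[simp] lemma single_apply (m n : ℕ) : single m n = if n = m then 1 else 0 := rfl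

lemma tendsto_apply_single (g : C₀(ℕ, ℝ) →L[ℝ] ℝ) :
    Tendsto (fun m => g (single m)) atTop (𝓝 0) := by
  let σ : ℕ → ℝ := fun i => SignType.sign (g (single i))
  have hσ : ∀ i, |σ i| ≤ 1 := fun i => by
    rcases lt_trichotomy (g (single i)) 0 with h | h | h <;> simp [σ, h, sign_neg, sign_pos]
  let u : ℕ → C₀(ℕ, ℝ) := fun n => ofEventuallyZero (fun j => if j < n then σ j else 0)
    ((eventually_ge_atTop n).mono fun _ h => if_neg h.not_gt)
  have hu_norm : ∀ n, ‖u n‖ ≤ 1 := fun n => norm_le_of_forall_abs_le zero_le_one fun j => by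
    by_cases hj : j < n <;> simp [u, hj, hσ]
  have hgu : ∀ n, g (u n) = ∑ i ∈ Finset.range n, |g (single i)| := by
    intro n
    induction n with
    | zero => rw [Finset.sum_range_zero, ← g.map_zero]; rfl
    | succ n ih =>
      have hstep : u (n + 1) = u n + σ n • single n := by
        ext j
        rcases lt_trichotomy j n with h | rfl | h
        · simp [u, h, h.ne, h.asymm]
        · simp [u]
        · simp [u, h.ne', h.not_gt, h.not_ge]
      rw [hstep, map_add, map_smul, ih, Finset.sum_range_succ, smul_eq_mul, ← sign_mul_self]
  have hsum : Summable fun i => |g (single i)| := by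
    refine summable_of_sum_range_le (c := ‖g‖) (fun _ => abs_nonneg _) fun n => ?_
    rw [← hgu]
    calc g (u n) ≤ ‖g‖ * ‖u n‖ := (le_abs_self _).trans (g.le_opNorm _)
      _ ≤ ‖g‖ := mul_le_of_le_one_right (norm_nonneg g) (hu_norm n)
  exact tendsto_zero_iff_abs_tendsto_zero _ |>.mpr hsum.tendsto_atTop_zero

def splice (z : C₀(ℕ, ℝ)) (m : ℕ) (t : ℝ) : C₀(ℕ, ℝ) :=
  ofEventuallyZero (fun n => if n < m then z n else if n = m then t else 0)
    ((eventually_gt_atTop m).mono fun _ h => by simp [h.not_gt, h.ne'])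

@[simp] lemma splice_apply_self (z : C₀(ℕ, ℝ)) (m : ℕ) (t : ℝ) : splice z m t m = t := by
  simp [splice]

lemma norm_splice_le (z : C₀(ℕ, ℝ)) (m : ℕ) (t : ℝ) : ‖splice z m t‖ ≤ max ‖z‖ |t| :=
  norm_le_of_forall_abs_le ((norm_nonneg z).trans (le_max_left _ _)) fun n => by
    simp only [splice, ofEventuallyZero_apply]
    split_ifs
    · exact (abs_apply_le_norm z n).trans (le_max_left _ _)
    · exact le_max_right _ _
    · exact abs_zero.trans_le ((norm_nonneg z).trans (le_max_left _ _))

lemma tendsto_splice_sub_smul_single (z : C₀(ℕ, ℝ)) (t : ℕ → ℝ) :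
    Tendsto (fun m => splice z m (t m) - t m • single m) atTop (𝓝 z) := by
  have hz := z.zero_at_infty'
  rw [cocompact_eq_cofinite, Nat.cofinite_eq_atTop] at hz
  refine Metric.tendsto_atTop.mpr fun ε hε => ?_
  obtain ⟨N, hN⟩ := Metric.tendsto_atTop.mp hz (ε / 2) (half_pos hε)
  refine ⟨N, fun m hm => (dist_eq_norm _ _).trans_lt ?_⟩
  have : ‖splice z m (t m) - t m • single m - z‖ ≤ ε / 2 :=
    norm_le_of_forall_abs_le (half_pos hε).le fun n => by
      have := hN n
      simp only [Real.dist_eq, sub_zero] at this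
      rcases lt_trichotomy n m with h | rfl | h
      · simp [splice, h, h.ne]; positivity
      · simpa [splice] using (this hm).le
      · simpa [splice, h.ne', h.not_gt] using (this (hm.trans h.le)).le
  linarith

lemma tendsto_apply_splice (g : C₀(ℕ, ℝ) →L[ℝ] ℝ) (z : C₀(ℕ, ℝ)) {t : ℕ → ℝ} {C : ℝ}
    (ht : ∀ m, |t m| ≤ C) : Tendsto (fun m => g (splice z m (t m))) atTop (𝓝 (g z)) := by
  have hdecomp : ∀ m, g (splice z m (t m)) =
      g (splice z m (t m) - t m • single m) + t m * g (single m) := fun m => by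
    rw [← smul_eq_mul, ← map_smul, ← map_add, sub_add_cancel]
  have hsingle : Tendsto (fun m => t m * g (single m)) atTop (𝓝 0) := by
    simpa only [mul_comm] using (tendsto_apply_single g).zero_mul_isBoundedUnder_le
      (isBoundedUnder_of ⟨C, fun m => by simpa using ht m⟩)
  have := ((g.continuous.tendsto z).comp (tendsto_splice_sub_smul_single z t)).add hsingle
  rw [add_zero] at this
  exact this.congr fun m => (hdecomp m).symm

end ZeroAtInftyContinuousMap

open ZeroAtInftyContinuousMap

/-- `ℝ × c₀` with the norm `‖(a, z)‖ = max (max |a| ‖z‖) ((|a| + ‖z‖) / (1 + s))`, obtained by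
pulling back the norm of `(ℝ × c₀) × WithLp 1 (ℝ × c₀)` along `v ↦ (v, (1 + s)⁻¹ • v)`. -/
def SumC0 (_s : ℝ) : Type := ℝ × C₀(ℕ, ℝ)

namespace SumC0

variable {s : ℝ}

instance : AddCommGroup (SumC0 s) := inferInstanceAs (AddCommGroup (ℝ × C₀(ℕ, ℝ)))
instance : Module ℝ (SumC0 s) := inferInstanceAs (Module ℝ (ℝ × C₀(ℕ, ℝ)))

variable (s) in
def equivProd : SumC0 s ≃ₗ[ℝ] ℝ × C₀(ℕ, ℝ) := LinearEquiv.refl ℝ _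

variable (s) in
def embedding : SumC0 s →ₗ[ℝ] (ℝ × C₀(ℕ, ℝ)) × WithLp 1 (ℝ × C₀(ℕ, ℝ)) :=
  (equivProd s).toLinearMap.prod
    ((1 + s)⁻¹ • (WithLp.linearEquiv 1 ℝ _).symm.toLinearMap ∘ₗ (equivProd s).toLinearMap)

instance : NormedAddCommGroup (SumC0 s) :=
  NormedAddCommGroup.induced _ _ (embedding s) fun _ _ h =>
    (equivProd s).injective (congrArg Prod.fst h)

instance : NormedSpace ℝ (SumC0 s) := NormedSpace.induced ℝ _ _ (embedding s)

variable (s) in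
def toProd : SumC0 s ≃L[ℝ] ℝ × C₀(ℕ, ℝ) where
  toLinearEquiv := equivProd s
  continuous_toFun := AddMonoidHomClass.continuous_of_bound (equivProd s) 1 fun x => by
    rw [one_mul]; exact le_max_left _ _
  continuous_invFun :=
    (AddMonoidHomClass.isometry_of_norm (embedding s) fun _ => rfl).isEmbedding.continuous_iff.mpr
      (continuous_id.prodMk (continuous_const.smul (WithLp.prod_continuous_toLp 1 _ _)))

instance : CompleteSpace (SumC0 s) :=
  ((toProd s).isUniformEmbedding.isUniformInducing.completeSpace_congr
    (toProd s).surjective).mpr inferInstance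

instance : Nontrivial (SumC0 s) := (toProd s).toEquiv.nontrivial

lemma norm_toProd_le (x : SumC0 s) : ‖toProd s x‖ ≤ ‖x‖ := le_max_left _ _

lemma norm_le_iff (hs : 0 < 1 + s) {x : SumC0 s} {C : ℝ} :
    ‖x‖ ≤ C ↔ |(toProd s x).1| ≤ C ∧ ‖(toProd s x).2‖ ≤ C ∧
      |(toProd s x).1| + ‖(toProd s x).2‖ ≤ (1 + s) * C := by
  change max ‖toProd s x‖ ‖(1 + s)⁻¹ • WithLp.toLp 1 (toProd s x)‖ ≤ C ↔ _
  rw [Prod.norm_def, norm_smul, WithLp.prod_norm_eq_of_L1,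
    Real.norm_of_nonneg (inv_nonneg.mpr hs.le), ← div_eq_inv_mul, max_le_iff, max_le_iff,
    div_le_iff₀' hs, and_assoc, Real.norm_eq_abs]
  rfl

variable (s) in
def fst : SumC0 s →L[ℝ] ℝ := ContinuousLinearMap.fst ℝ ℝ _ ∘L (toProd s).toContinuousLinearMap

variable (s) in
def inr : C₀(ℕ, ℝ) →L[ℝ] SumC0 s :=
  (toProd s).symm.toContinuousLinearMap ∘L ContinuousLinearMap.inr ℝ ℝ _

variable (s) in
def unitFst : SumC0 s := (toProd s).symm (1, 0)

@[simp] lemma fst_apply (x : SumC0 s) : fst s x = (toProd s x).1 := rfl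

@[simp] lemma toProd_inr (z : C₀(ℕ, ℝ)) : toProd s (inr s z) = (0, z) := rfl

@[simp] lemma toProd_unitFst : toProd s (unitFst s) = (1, 0) := rfl

lemma norm_unitFst (hs : 0 ≤ s) : ‖unitFst s‖ = 1 :=
  le_antisymm ((norm_le_iff (by linarith)).mpr (by simp; linarith)) <| by
    simpa using norm_toProd_le (unitFst s)

lemma norm_fst (hs : 0 ≤ s) : ‖fst s‖ = 1 :=
  le_antisymm (ContinuousLinearMap.opNorm_le_bound _ zero_le_one fun x => by
    simpa using (norm_fst_le (toProd s x)).trans (norm_toProd_le x)) <| by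
    simpa [norm_unitFst hs] using (fst s).le_opNorm (unitFst s)

lemma sliceSet_fst_subset (hs : 0 ≤ s) (α : ℝ) :
    sliceSet (SumC0 s) (fst s) α ⊆ closedBall (unitFst s) (s + 2 * α) := by
  rintro y ⟨hy, hfy⟩
  rw [mem_closedBall_zero_iff, norm_le_iff (by linarith)] at hy
  obtain ⟨ha, -, hsum⟩ := hy
  rw [fst_apply] at hfy
  rw [mem_closedBall, dist_eq_norm, norm_le_iff (by linarith)]
  simp only [map_sub, toProd_unitFst, Prod.fst_sub, Prod.snd_sub, sub_zero]
  have ha_le := le_abs_self (toProd s y).1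
  rw [abs_of_nonpos (by linarith), neg_sub]
  exact ⟨by linarith, by linarith, by nlinarith⟩

def spliceSnd (w : SumC0 s) (m : ℕ) (t : ℝ) : SumC0 s :=
  w + inr s ((toProd s w).2.splice m t - (toProd s w).2)

@[simp] lemma toProd_spliceSnd (w : SumC0 s) (m : ℕ) (t : ℝ) :
    toProd s (w.spliceSnd m t) = ((toProd s w).1, (toProd s w).2.splice m t) := by
  simp only [spliceSnd, map_add, toProd_inr]
  exact Prod.ext (add_zero _) (add_sub_cancel _ _)

lemma norm_spliceSnd_le_one (hs₀ : 0 ≤ s) (hs₁ : s ≤ 1) {w : SumC0 s} (hw : ‖w‖ ≤ 1) (m : ℕ)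
    {t : ℝ} (ht : |t| ≤ s) : ‖w.spliceSnd m t‖ ≤ 1 := by
  rw [norm_le_iff (by linarith)] at hw ⊢
  obtain ⟨ha, hz, hsum⟩ := hw
  have hsplice := norm_splice_le (toProd s w).2 m t
  simp only [toProd_spliceSnd]
  refine ⟨ha, hsplice.trans (max_le hz (ht.trans hs₁)), ?_⟩
  rcases le_total ‖(toProd s w).2‖ |t| with h | h
  · rw [max_eq_right h] at hsplice; linarith
  · rw [max_eq_left h] at hsplice; linarith

lemma tendsto_apply_spliceSnd (f : SumC0 s →L[ℝ] ℝ) (w : SumC0 s) {t : ℕ → ℝ} {C : ℝ}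
    (ht : ∀ m, |t m| ≤ C) : Tendsto (fun m => f (w.spliceSnd m (t m))) atTop (𝓝 (f w)) := by
  have := ((tendsto_apply_splice (f ∘L inr s) (toProd s w).2 ht).sub_const
    ((f ∘L inr s) (toProd s w).2)).const_add (f w)
  simpa [spliceSnd] using this

lemma exists_mem_comboSet_le_norm_sub (hs₀ : 0 ≤ s) (hs₁ : s ≤ 1) (x : SumC0 s) {n : ℕ}
    {l : Fin n → ℝ} {W : Fin n → Set (SumC0 s)} (hl : ∑ i, l i = 1)
    (hW : ∀ i, IsRelWeakOpen (SumC0 s) (W i)) : ∃ c ∈ comboSet (SumC0 s) l W, s ≤ ‖x - c‖ := by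
  choose w hw using fun i => (hW i).1
  set t : ℕ → ℝ := fun m => if (toProd s x).2 m ≤ 0 then s else -s
  have ht : ∀ m, |t m| ≤ s := fun m => by
    simp only [t]; split_ifs <;> simp [abs_of_nonneg hs₀]
  have hfar : ∀ m, s ≤ |(toProd s x).2 m - t m| := fun m => by
    simp only [t]; split_ifs with h
    · rw [abs_of_nonpos (by linarith)]; linarith
    · rw [abs_of_pos (by linarith)]; linarith
  have hmem : ∀ᶠ m in atTop, ∀ i, (w i).spliceSnd m (t m) ∈ W i :=
    eventually_all.mpr fun i => (hW i).eventually_mem (hw i)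
      (fun f => tendsto_apply_spliceSnd f (w i) ht)
      (Eventually.of_forall fun m =>
        norm_spliceSnd_le_one hs₀ hs₁ ((hW i).norm_le_one (hw i)) m (ht m))
  obtain ⟨m, hm⟩ := hmem.exists
  refine ⟨∑ i, l i • (w i).spliceSnd m (t m), ⟨_, hm, rfl⟩, ?_⟩
  have hcoord : (toProd s (∑ i, l i • (w i).spliceSnd m (t m))).2 m = t m := by
    simp [map_sum, Prod.snd_sum, ZeroAtInftyContinuousMap.sum_apply, ← Finset.sum_mul, hl]
  calc s ≤ |(toProd s (x - ∑ i, l i • (w i).spliceSnd m (t m))).2 m| := by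
        rw [map_sub, Prod.snd_sub, ZeroAtInftyContinuousMap.sub_apply, hcoord]
        exact hfar m
    _ ≤ ‖(toProd s (x - ∑ i, l i • (w i).spliceSnd m (t m))).2‖ := abs_apply_le_norm _ m
    _ ≤ ‖x - ∑ i, l i • (w i).spliceSnd m (t m)‖ := (norm_snd_le _).trans (norm_toProd_le _)

lemma add_mem_sliceRadii (hs : 0 ≤ s) {ε : ℝ} (hε : 0 < ε) : s + ε ∈ sliceRadii (SumC0 s) := by
  refine ⟨by linarith, unitFst s, norm_unitFst hs, _, ⟨fst s, norm_fst hs, ε / 2, half_pos hε, rfl⟩,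
    ?_⟩
  convert sliceSet_fst_subset hs (ε / 2) using 2
  ring

lemma le_of_mem_comboRadii (hs₀ : 0 ≤ s) (hs₁ : s ≤ 1) {r : ℝ} (hr : r ∈ comboRadii (SumC0 s)) :
    s ≤ r := by
  obtain ⟨-, x, -, n, l, W, -, hl, hW, hsub⟩ := hr
  obtain ⟨c, hc, hsc⟩ := exists_mem_comboSet_le_norm_sub hs₀ hs₁ x hl hW
  calc s ≤ ‖x - c‖ := hsc
    _ = dist c x := by rw [dist_comm, dist_eq_norm]
    _ ≤ r := hsub hc

end SumC0

theorem stmt_10 (r : ℝ) (hr : 0 < r) :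
    ∃ (X : Type) (_ : NormedAddCommGroup X) (_ : NormedSpace ℝ X) (_ : CompleteSpace X)
      (_ : Nontrivial X), Tcc X = r / (1 + r) ∧ Tw X = r / (1 + r) ∧ Ts X = r / (1 + r) := by
  have hs₀ : 0 ≤ r / (1 + r) := by positivity
  have hs₁ : r / (1 + r) ≤ 1 := (div_le_one (by positivity)).mpr (by linarith)
  exact ⟨SumC0 (r / (1 + r)), inferInstance, inferInstance, inferInstance, inferInstance,
    thickness_indices_eq _ (fun _ => SumC0.le_of_mem_comboRadii hs₀ hs₁)
      fun _ => SumC0.add_mem_sliceRadii hs₀⟩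
end
end

section
/- For every δ ∈ (0,2) there exists a real Banach space X such that every finite convex combination of slices of B_X has diameter at least δ, but for every ε > 0 there exists a slice S of B_X with diam(S) ≤ δ + ε. -/
open Metric Set

noncomputable section

variable (X : Type*) [NormedAddCommGroup X] [NormedSpace ℝ X]

/-! With `c = 1 - δ/2`, renorm `ℝ × ℓ∞` by `‖(a, y)‖ = max |a| (c|a| + ‖y‖)`, so that the unit
ball is `{|a| ≤ 1, ‖y‖ ≤ 1 - c|a|}`. The slice `{a > 1 - α}` then only contains points whose
`ℓ∞`-part has norm at most `δ/2 + cα`, so its diameter is at most `δ + 3α`.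

Conversely, every functional `f` satisfies `∑ₖ |f(0, eₖ)| ≤ ‖f‖`, so `f(0, eₖ) → 0`. Given a point
`x` of a slice, overwriting the `k`-th coordinate of its `ℓ∞`-part by any `τ` with `|τ| ≤ δ/2`
keeps it in the unit ball, and for `k` large also in the slice. Doing this with `τ = ±δ/2` in
finitely many slices at a common `k` produces two points of the convex combination at distance
`δ`. -/

open scoped NNReal ENNReal
open Filter Topology

section Slices

variable {V : Type*} [NormedAddCommGroup V] [NormedSpace ℝ V]

theorem sliceSet_nonempty {f : V →L[ℝ] ℝ} (hf : ‖f‖ = 1) {α : ℝ} (hα : 0 < α) :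
    (sliceSet V f α).Nonempty := by
  obtain ⟨x, hx, hfx⟩ := f.exists_lt_apply_of_lt_opNorm (r := 1 - α) (by linarith)
  rw [Real.norm_eq_abs] at hfx
  rcases abs_cases (f x) with ⟨h, -⟩ | ⟨h, -⟩
  · exact ⟨x, mem_closedBall_zero_iff.mpr hx.le, by linarith⟩
  · exact ⟨-x, by simpa using hx.le, by rw [map_neg]; linarith⟩

theorem IsSlice.subset_closedBall {S : Set V} (hS : IsSlice V S) : S ⊆ closedBall 0 1 := by
  obtain ⟨f, -, α, -, rfl⟩ := hS
  exact fun _ hx => hx.1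

theorem comboSet_subset_closedBall {n : ℕ} {l : Fin n → ℝ} {S : Fin n → Set V}
    (hl0 : ∀ i, 0 ≤ l i) (hl1 : ∑ i, l i = 1) (hS : ∀ i, S i ⊆ closedBall 0 1) :
    comboSet V l S ⊆ closedBall 0 1 := by
  rintro _ ⟨w, hw, rfl⟩
  exact (convex_closedBall 0 1).sum_mem (fun i _ => hl0 i) hl1 fun i _ => hS i (hw i)

theorem norm_le_diam_comboSet {n : ℕ} {l : Fin n → ℝ} {S : Fin n → Set V}
    (hl0 : ∀ i, 0 ≤ l i) (hl1 : ∑ i, l i = 1) (hS : ∀ i, S i ⊆ closedBall 0 1)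
    {p q : Fin n → V} (hp : ∀ i, p i ∈ S i) (hq : ∀ i, q i ∈ S i) {d : V}
    (hd : ∀ i, p i - q i = d) : ‖d‖ ≤ diam (comboSet V l S) := by
  have hbdd := isBounded_closedBall.subset (comboSet_subset_closedBall hl0 hl1 hS)
  calc ‖d‖ = dist (∑ i, l i • p i) (∑ i, l i • q i) := by
        simp_rw [dist_eq_norm, ← Finset.sum_sub_distrib, ← smul_sub, hd, ← Finset.sum_smul, hl1,
          one_smul]
    _ ≤ diam (comboSet V l S) := dist_le_diam_of_mem hbdd ⟨p, hp, rfl⟩ ⟨q, hq, rfl⟩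

end Slices

section Linfty

variable {ι : Type*} [DecidableEq ι]

theorem summable_abs_apply_single (F : lp (fun _ : ι => ℝ) ∞ →L[ℝ] ℝ) :
    Summable fun i => |F (lp.single ∞ i 1)| := by
  refine summable_of_sum_le (fun _ => abs_nonneg _) (c := ‖F‖) fun s => ?_
  set w : lp (fun _ : ι => ℝ) ∞ :=
    ∑ i ∈ s, lp.single ∞ i (SignType.sign (F (lp.single ∞ i 1)) : ℝ)
  have hw : ‖w‖ ≤ 1 := lp.norm_le_of_forall_le zero_le_one fun j => by
    simp only [w, lp.coeFn_sum, Finset.sum_apply, lp.coeFn_single, Finset.sum_pi_single]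
    split_ifs
    · cases SignType.sign (F (lp.single ∞ j 1)) <;> simp
    · simp
  calc ∑ i ∈ s, |F (lp.single ∞ i 1)| = F w := by
        refine (map_sum F _ s).symm ▸ Finset.sum_congr rfl fun i _ => ?_
        rw [← mul_one (SignType.sign (F (lp.single ∞ i 1)) : ℝ), ← smul_eq_mul, lp.single_smul,
          map_smul, smul_eq_mul, sign_mul_self]
    _ ≤ ‖F‖ * ‖w‖ := (le_abs_self _).trans (F.le_opNorm w)
    _ ≤ ‖F‖ := mul_le_of_le_one_right (norm_nonneg F) hw

theorem tendsto_apply_single_cofinite (F : lp (fun _ : ι => ℝ) ∞ →L[ℝ] ℝ) :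
    Tendsto (fun i => F (lp.single ∞ i 1)) cofinite (𝓝 0) :=
  (summable_abs_apply_single F).of_abs.tendsto_cofinite_zero

theorem norm_add_single_sub_apply_le (y : lp (fun _ : ι => ℝ) ∞) (k : ι) (τ : ℝ) :
    ‖y + lp.single ∞ k (τ - y k)‖ ≤ max ‖y‖ |τ| :=
  lp.norm_le_of_forall_le (le_max_of_le_right (abs_nonneg τ)) fun j => by
    rcases eq_or_ne j k with rfl | hjk
    · simp
    · simpa [Pi.single_apply, hjk] using
        le_max_of_le_left (lp.norm_apply_le_norm ENNReal.top_ne_zero y j)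

end Linfty

/-- `ℝ × E` with the norm `‖(a, y)‖ = max |a| (c * |a| + ‖y‖)`. -/
def TaperedProd (_c : ℝ≥0) (E : Type*) : Type _ := ℝ × E

namespace TaperedProd

variable {c : ℝ≥0}

section Normed

variable {E : Type*} [NormedAddCommGroup E]

instance : AddCommGroup (TaperedProd c E) := inferInstanceAs (AddCommGroup (ℝ × E))

instance : Nontrivial (TaperedProd c E) := inferInstanceAs (Nontrivial (ℝ × E))

variable [NormedSpace ℝ E]

instance : Module ℝ (TaperedProd c E) := inferInstanceAs (Module ℝ (ℝ × E))

variable (c E) in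
def equivProd : TaperedProd c E ≃ₗ[ℝ] ℝ × E := LinearEquiv.refl ℝ (ℝ × E)

instance : NormedAddCommGroup (TaperedProd c E) :=
  AddGroupNorm.toNormedAddCommGroup
    { toFun := fun x =>
        max |(equivProd c E x).1| (c * |(equivProd c E x).1| + ‖(equivProd c E x).2‖)
      map_zero' := by simp
      add_le' := fun x y => by
        simp only [map_add, Prod.fst_add, Prod.snd_add]
        generalize equivProd c E x = p, equivProd c E y = q
        have h1 := abs_add_le p.1 q.1
        have h2 := norm_add_le p.2 q.2
        have h3 := mul_le_mul_of_nonneg_left h1 c.coe_nonneg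
        refine max_le ?_ ?_
        · exact h1.trans (add_le_add (le_max_left _ _) (le_max_left _ _))
        · exact le_trans (by linarith) (add_le_add (le_max_right _ _) (le_max_right _ _))
      neg' := fun x => by simp
      eq_zero_of_map_eq_zero' := fun x hx => by
        refine (equivProd c E).map_eq_zero_iff.mp ?_
        generalize equivProd c E x = p at hx ⊢
        have ha : |p.1| ≤ 0 := hx ▸ le_max_left _ _
        have hy : c * |p.1| + ‖p.2‖ ≤ 0 := hx ▸ le_max_right _ _
        have := mul_nonneg c.coe_nonneg (abs_nonneg p.1)
        exact Prod.ext (abs_nonpos_iff.mp ha) (norm_le_zero_iff.mp (by linarith)) }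

theorem norm_def (x : TaperedProd c E) :
    ‖x‖ = max |(equivProd c E x).1| (c * |(equivProd c E x).1| + ‖(equivProd c E x).2‖) := rfl

theorem norm_symm_equivProd (a : ℝ) (y : E) :
    ‖(equivProd c E).symm (a, y)‖ = max |a| (c * |a| + ‖y‖) := rfl

instance : NormedSpace ℝ (TaperedProd c E) where
  norm_smul_le r x := by
    simp only [norm_def, map_smul, Prod.smul_fst, Prod.smul_snd, smul_eq_mul, abs_mul, norm_smul,
      Real.norm_eq_abs, mul_max_of_nonneg _ _ (abs_nonneg r)]
    exact le_of_eq (by ring_nf)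

theorem abs_fst_le_norm (x : TaperedProd c E) : |(equivProd c E x).1| ≤ ‖x‖ := le_max_left _ _

theorem norm_equivProd_le (x : TaperedProd c E) : ‖equivProd c E x‖ ≤ ‖x‖ := by
  have := mul_nonneg c.coe_nonneg (abs_nonneg (equivProd c E x).1)
  exact max_le (le_max_left _ _) (le_max_of_le_right (by linarith))

theorem norm_snd_le_norm (x : TaperedProd c E) : ‖(equivProd c E x).2‖ ≤ ‖x‖ :=
  (norm_snd_le _).trans (norm_equivProd_le x)

theorem norm_le_norm_equivProd (x : TaperedProd c E) : ‖x‖ ≤ (1 + c) * ‖equivProd c E x‖ := by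
  rw [norm_def, Prod.norm_def, Real.norm_eq_abs]
  generalize equivProd c E x = p
  have ha := le_max_left |p.1| ‖p.2‖
  have hy := le_max_right |p.1| ‖p.2‖
  have hc := c.coe_nonneg
  exact max_le (by nlinarith [abs_nonneg p.1]) (by nlinarith)

instance [CompleteSpace E] : CompleteSpace (TaperedProd c E) := by
  have hLip : LipschitzWith (Real.toNNReal 1) (equivProd c E) :=
    AddMonoidHomClass.lipschitz_of_bound (equivProd c E) 1 fun x => by
      simpa using norm_equivProd_le x
  have hAnti : AntilipschitzWith (1 + c) (equivProd c E) :=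
    AddMonoidHomClass.antilipschitz_of_bound (equivProd c E) fun x => by
      simpa using norm_le_norm_equivProd x
  exact ((hAnti.isUniformInducing hLip.uniformContinuous).completeSpace_congr
    (equivProd c E).surjective).mpr inferInstance

variable (c E) in
def inr : E →ₗᵢ[ℝ] TaperedProd c E where
  toLinearMap := (equivProd c E).symm.toLinearMap ∘ₗ LinearMap.inr ℝ ℝ E
  norm_map' y := by simp [norm_symm_equivProd]

@[simp] theorem equivProd_inr (y : E) : equivProd c E (inr c E y) = (0, y) := rfl

variable (c E) in
def fstL : TaperedProd c E →L[ℝ] ℝ :=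
  (LinearMap.fst ℝ ℝ E ∘ₗ (equivProd c E).toLinearMap).mkContinuous 1 fun x => by
    simpa using abs_fst_le_norm x

@[simp] theorem fstL_apply (x : TaperedProd c E) : fstL c E x = (equivProd c E x).1 := rfl

theorem norm_fstL (hc : c ≤ 1) : ‖fstL c E‖ = 1 := by
  refine le_antisymm (LinearMap.mkContinuous_norm_le _ zero_le_one _) ?_
  have h := (fstL c E).unit_le_opNorm ((equivProd c E).symm (1, 0)) (by
    rw [norm_symm_equivProd]; simpa using hc)
  simpa using h

theorem diam_sliceSet_fstL_le (hc : c ≤ 1) {α : ℝ} (hα : 0 ≤ α) :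
    diam (sliceSet (TaperedProd c E) (fstL c E) α) ≤ 2 * (1 - c) + 3 * α := by
  have hc0 := c.coe_nonneg
  have hc1 : (c : ℝ) ≤ 1 := hc
  refine diam_le_of_forall_dist_le (by linarith) fun u ⟨hu, hua⟩ v ⟨hv, hva⟩ => ?_
  rw [mem_closedBall_zero_iff, norm_def] at hu hv
  rw [fstL_apply] at hua hva
  rw [dist_eq_norm, norm_def, map_sub, Prod.fst_sub]
  generalize equivProd c E u = p at *
  generalize equivProd c E v = q at *
  obtain ⟨hp1, hp2⟩ := max_le_iff.mp hu
  obtain ⟨hq1, hq2⟩ := max_le_iff.mp hv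
  have h1 : |p.1 - q.1| ≤ α := abs_sub_le_iff.mpr
    ⟨by linarith [le_abs_self p.1], by linarith [le_abs_self q.1]⟩
  have hp : ‖p.2‖ ≤ 1 - c + c * α := by nlinarith [le_abs_self p.1]
  have hq : ‖q.2‖ ≤ 1 - c + c * α := by nlinarith [le_abs_self q.1]
  have h2 : ‖(p - q).2‖ ≤ ‖p.2‖ + ‖q.2‖ := norm_sub_le _ _
  have : c * α ≤ α := mul_le_of_le_one_left hα hc1
  have : c * |p.1 - q.1| ≤ c * α := mul_le_mul_of_nonneg_left h1 hc0
  exact max_le (by linarith) (by linarith)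

theorem exists_isSlice_diam_le (hc : c ≤ 1) {ε : ℝ} (hε : 0 < ε) :
    ∃ S, IsSlice (TaperedProd c E) S ∧ diam S ≤ 2 * (1 - c) + ε :=
  ⟨_, ⟨fstL c E, norm_fstL hc, ε / 3, by positivity, rfl⟩,
    (diam_sliceSet_fstL_le hc (by positivity)).trans_eq (by ring)⟩

end Normed

section Linfty

variable {ι : Type*} [DecidableEq ι]

def updateCoord (x : TaperedProd c (lp (fun _ : ι => ℝ) ∞)) (k : ι) (τ : ℝ) :
    TaperedProd c (lp (fun _ : ι => ℝ) ∞) :=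
  x + inr c _ (lp.single ∞ k (τ - (equivProd c _ x).2 k))

theorem norm_updateCoord_le {x : TaperedProd c (lp (fun _ : ι => ℝ) ∞)} (hx : ‖x‖ ≤ 1) (k : ι)
    {τ : ℝ} (hτ : |τ| ≤ 1 - c) : ‖updateCoord x k τ‖ ≤ 1 := by
  rw [norm_def] at hx ⊢
  simp only [updateCoord, map_add, equivProd_inr, Prod.fst_add, Prod.snd_add, add_zero]
  generalize equivProd c _ x = p at *
  obtain ⟨ha, hy⟩ := max_le_iff.mp hx
  have hca : c * |p.1| ≤ c := mul_le_of_le_one_right c.coe_nonneg ha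
  have h := norm_add_single_sub_apply_le p.2 k τ
  refine max_le ha ?_
  rcases max_choice ‖p.2‖ |τ| with h' | h' <;> rw [h'] at h <;> linarith

theorem updateCoord_sub_updateCoord (x : TaperedProd c (lp (fun _ : ι => ℝ) ∞)) (k : ι)
    (τ σ : ℝ) : updateCoord x k τ - updateCoord x k σ = inr c _ (lp.single ∞ k (τ - σ)) := by
  rw [updateCoord, updateCoord, add_sub_add_left_eq_sub, ← map_sub, ← lp.single_sub,
    sub_sub_sub_cancel_right]

theorem exists_eventually_updateCoord_mem {S : Set (TaperedProd c (lp (fun _ : ι => ℝ) ∞))}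
    (hS : IsSlice (TaperedProd c (lp (fun _ : ι => ℝ) ∞)) S) :
    ∃ x, ∀ᶠ k in cofinite, ∀ τ : ℝ, |τ| ≤ 1 - c → updateCoord x k τ ∈ S := by
  obtain ⟨f, hf, α, hα, rfl⟩ := hS
  obtain ⟨x, hx, hfx⟩ := sliceSet_nonempty hf hα
  have hx1 := mem_closedBall_zero_iff.mp hx
  have hsmall := Metric.tendsto_nhds.mp
    (tendsto_apply_single_cofinite (f.comp (inr c _).toContinuousLinearMap))
    ((f x - (1 - α)) / 2) (by linarith)
  refine ⟨x, hsmall.mono fun k hk τ hτ =>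
    ⟨mem_closedBall_zero_iff.mpr (norm_updateCoord_le hx1 k hτ), ?_⟩⟩
  set y := (equivProd c _ x).2
  set g := f (inr c _ (lp.single ∞ k 1))
  have hg : |g| < (f x - (1 - α)) / 2 := by simpa [Real.dist_eq] using hk
  have hfu : f (updateCoord x k τ) = f x + (τ - y k) * g := by
    have : lp.single ∞ k (τ - y k) = (τ - y k) • (lp.single ∞ k 1 : lp (fun _ : ι => ℝ) ∞) := by
      rw [← lp.single_smul, smul_eq_mul, mul_one]
    rw [updateCoord, map_add, this, map_smul, map_smul, smul_eq_mul]
  have hyk : |y k| ≤ 1 := (lp.norm_apply_le_norm ENNReal.top_ne_zero y k).trans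
    ((norm_snd_le_norm x).trans hx1)
  have hτk : |τ - y k| ≤ 2 := (abs_sub _ _).trans (by linarith [c.coe_nonneg])
  have hperturb : |(τ - y k) * g| < f x - (1 - α) := by
    rw [abs_mul]; nlinarith [abs_nonneg g, abs_nonneg (τ - y k)]
  show 1 - α < f (updateCoord x k τ)
  rw [hfu]
  linarith [neg_abs_le ((τ - y k) * g)]

theorem le_diam_comboSet [Infinite ι] (hc : c ≤ 1) {n : ℕ} {l : Fin n → ℝ}
    {S : Fin n → Set (TaperedProd c (lp (fun _ : ι => ℝ) ∞))} (hl0 : ∀ i, 0 ≤ l i)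
    (hl1 : ∑ i, l i = 1) (hS : ∀ i, IsSlice (TaperedProd c (lp (fun _ : ι => ℝ) ∞)) (S i)) :
    2 * (1 - c) ≤ diam (comboSet _ l S) := by
  choose x hev using fun i => exists_eventually_updateCoord_mem (hS i)
  obtain ⟨k, hk⟩ := (eventually_all.mpr hev).exists
  have hc' : 0 ≤ 1 - (c : ℝ) := sub_nonneg.mpr hc
  have h := norm_le_diam_comboSet hl0 hl1 (fun i => (hS i).subset_closedBall)
    (p := fun i => updateCoord (x i) k (1 - c)) (q := fun i => updateCoord (x i) k (-(1 - c)))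
    (fun i => hk i _ (abs_of_nonneg hc').le) (fun i => hk i _ (by rw [abs_neg, abs_of_nonneg hc']))
    (fun i => updateCoord_sub_updateCoord (x i) k _ _)
  rwa [LinearIsometry.norm_map, lp.norm_single ENNReal.zero_lt_top, Real.norm_eq_abs,
    sub_neg_eq_add, ← two_mul, abs_of_nonneg (by positivity)] at h

end Linfty

end TaperedProd

theorem stmt_11 (δ : ℝ) (hδ₀ : 0 < δ) (hδ₂ : δ < 2) :
    ∃ (X : Type) (_ : NormedAddCommGroup X) (_ : NormedSpace ℝ X) (_ : CompleteSpace X)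
      (_ : Nontrivial X),
      (∀ (n : ℕ) (l : Fin n → ℝ) (S : Fin n → Set X), (∀ i, 0 ≤ l i) → (∑ i, l i) = 1 →
        (∀ i, IsSlice X (S i)) → δ ≤ Metric.diam (comboSet X l S)) ∧
      ∀ ε > (0 : ℝ), ∃ S : Set X, IsSlice X S ∧ Metric.diam S ≤ δ + ε := by
  let c : ℝ≥0 := ⟨1 - δ / 2, by linarith⟩
  have hc : c ≤ 1 := by rw [← NNReal.coe_le_coe]; change 1 - δ / 2 ≤ 1; linarith
  have hδ : 2 * (1 - (c : ℝ)) = δ := by change 2 * (1 - (1 - δ / 2)) = δ; ring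
  refine ⟨TaperedProd c (lp (fun _ : ℕ => ℝ) ∞), inferInstance, inferInstance, inferInstance,
    inferInstance, fun n l S hl0 hl1 hS => ?_, fun ε hε => ?_⟩
  · simpa only [hδ] using TaperedProd.le_diam_comboSet hc hl0 hl1 hS
  · simpa only [hδ] using TaperedProd.exists_isSlice_diam_le hc hε
end
end
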